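/- arXiv:1110.3802 — 5 statements merged into one kernel-verified Lean document; each statement's English description precedes it below -/
import Mathlib

section
/- Let f be an eigenvector of H(G) with eigenvalue λ, let (i,j) be an edge of G with f_i ≠ 0 and f_j ≠ 0, and let G' = G − (i,j) be the factor obtained by deleting this edge. Then f is an eigenvector, with the same eigenvalue λ, of the Hamiltonian H(G') = −A(G') + Q̃, where Q̃ agrees with Q on all vertices except that Q̃_{ii} = q_i − f_j/f_i and Q̃_{jj} = q_j − f_i/f_j. Equivalently, with α = f_j/f_i one has B(i,j;α)f = 0 and (H(G) + B(i,j;α))f = λf. -/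
/-! Adding `B(i,j;α)` to `H(G)` is the same as deleting the edge `(i,j)` and shifting the
potential by `-α` at `i` and `-1/α` at `j`. For `α = f j / f i` the vector `f` lies in the kernel
of `B(i,j;α)`, so this perturbation leaves the action of the Hamiltonian on `f` unchanged. -/

open Matrix

open Classical in
/-- The discrete Schrödinger operator (Hamiltonian) `H(G) = -A(G) + Q` on the graph `G`
with potential `q`, given entrywise: `q a` on the diagonal, `-1` on adjacent pairs of
vertices, and `0` otherwise. -/
noncomputable def Ham {V : ℕ} (G : SimpleGraph (Fin V)) (q : Fin V → ℝ) :
    Matrix (Fin V) (Fin V) ℝ :=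
  Matrix.of fun a b => if a = b then q a else if G.Adj a b then -1 else 0

/-- The perturbation matrix `B(i,j;α)`: its only (potentially) nonzero entries are
`B i i = -α`, `B j j = -1/α` and `B i j = B j i = 1`. -/
noncomputable def Bmat {V : ℕ} (i j : Fin V) (α : ℝ) : Matrix (Fin V) (Fin V) ℝ :=
  Matrix.of fun a b =>
    (if a = i ∧ b = i then -α else 0) + (if a = j ∧ b = j then -1/α else 0) +
      (if (a = i ∧ b = j) ∨ (a = j ∧ b = i) then 1 else 0)

lemma Bmat_mulVec_apply {V : ℕ} {i j : Fin V} (hij : i ≠ j) (α : ℝ) (f : Fin V → ℝ)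
    (a : Fin V) :
    (Bmat i j α *ᵥ f) a =
      if a = i then f j - α * f i else if a = j then f i - f j / α else 0 := by
  by_cases hai : a = i
  · subst hai
    simp [Bmat, mulVec, dotProduct, hij, ite_and, add_mul, Finset.sum_add_distrib,
      sub_eq_neg_add]
  · by_cases haj : a = j
    · subst haj
      simp [Bmat, mulVec, dotProduct, hai, ite_and, add_mul, Finset.sum_add_distrib,
        sub_eq_neg_add, div_eq_inv_mul]
    · simp [Bmat, mulVec, dotProduct, hai, haj]

lemma Bmat_div_mulVec_eq_zero {V : ℕ} {i j : Fin V} (hij : i ≠ j) {f : Fin V → ℝ}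
    (hfi : f i ≠ 0) (hfj : f j ≠ 0) : Bmat i j (f j / f i) *ᵥ f = 0 := by
  ext a
  simp [Bmat_mulVec_apply hij, div_mul_cancel₀ _ hfi, div_div_cancel₀ hfj]

lemma Ham_deleteEdges_update_eq_add_Bmat {V : ℕ} {G : SimpleGraph (Fin V)} {i j : Fin V}
    (hij : G.Adj i j) (q : Fin V → ℝ) (α : ℝ) :
    Ham (G.deleteEdges {s(i, j)})
        (Function.update (Function.update q i (q i - α)) j (q j - 1 / α))
      = Ham G q + Bmat i j α := by
  have hne : i ≠ j := G.ne_of_adj hij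
  ext a b
  simp only [Ham, Bmat, of_apply, Matrix.add_apply, Function.update_apply]
  by_cases hab : a = b
  · subst hab
    by_cases hai : a = i <;> by_cases haj : a = j <;> simp_all [sub_eq_add_neg, neg_div]
  · by_cases hedge : (a = i ∧ b = j) ∨ (a = j ∧ b = i)
    · obtain ⟨rfl, rfl⟩ | ⟨rfl, rfl⟩ := hedge <;> simp [hne, hne.symm, hij, hij.symm]
    · have hdel : (G.deleteEdges {s(i, j)}).Adj a b ↔ G.Adj a b := by
        rw [SimpleGraph.deleteEdges_adj, Set.mem_singleton_iff, Sym2.eq_iff]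
        exact and_iff_left hedge
      have hoff : ¬(a = i ∧ b = i) ∧ ¬(a = j ∧ b = j) := by
        constructor <;> rintro ⟨rfl, rfl⟩ <;> exact hab rfl
      simp only [hab, hoff, hedge, if_false, add_zero]
      split_ifs <;> simp_all

theorem stmt_0_general {V : ℕ} (G : SimpleGraph (Fin V)) (q : Fin V → ℝ)
    (f : Fin V → ℝ) (lam : ℝ) (heig : Ham G q *ᵥ f = lam • f)
    (i j : Fin V) (hij : G.Adj i j) (hfi : f i ≠ 0) (hfj : f j ≠ 0) :
    Ham (G.deleteEdges {s(i, j)})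
        (Function.update (Function.update q i (q i - f j / f i)) j (q j - f i / f j)) *ᵥ f
      = lam • f ∧
    Bmat i j (f j / f i) *ᵥ f = 0 ∧
    (Ham G q + Bmat i j (f j / f i)) *ᵥ f = lam • f := by
  have hB : Bmat i j (f j / f i) *ᵥ f = 0 := Bmat_div_mulVec_eq_zero (G.ne_of_adj hij) hfi hfj
  have hpert : (Ham G q + Bmat i j (f j / f i)) *ᵥ f = lam • f := by
    rw [add_mulVec, hB, heig, add_zero]
  refine ⟨?_, hB, hpert⟩
  rwa [← one_div_div (f j) (f i), Ham_deleteEdges_update_eq_add_Bmat hij]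

/-- If `f` is an eigenvector of `H(G)` with eigenvalue `λ`, and `(i,j)` is an
edge of `G` with `f i ≠ 0 ≠ f j`, then `f` is an eigenvector with the same eigenvalue of the
Hamiltonian of the factor `G' = G - (i,j)` whose potential is modified at `i` and `j` by
`q i - f j / f i` and `q j - f i / f j`; equivalently, with `α = f j / f i`,
`B(i,j;α) f = 0` and `(H(G) + B(i,j;α)) f = λ f`. -/
theorem stmt_0 {V : ℕ} (G : SimpleGraph (Fin V)) (hG : G.Connected) (q : Fin V → ℝ)
    (f : Fin V → ℝ) (lam : ℝ) (hf : f ≠ 0) (heig : Ham G q *ᵥ f = lam • f)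
    (i j : Fin V) (hij : G.Adj i j) (hfi : f i ≠ 0) (hfj : f j ≠ 0) :
    Ham (G.deleteEdges {s(i, j)})
        (Function.update (Function.update q i (q i - f j / f i)) j (q j - f i / f j)) *ᵥ f
      = lam • f ∧
    Bmat i j (f j / f i) *ᵥ f = 0 ∧
    (Ham G q + Bmat i j (f j / f i)) *ᵥ f = lam • f :=
  stmt_0_general G q f lam heig i j hij hfi hfj
end

section
/- Let G' = G − (i,j) with parameter-dependent Hamiltonian H(G';α) = H(G) + B(i,j;α). (i) Suppose for some α ≠ 0 a normalized vector f satisfies H(G';α)f = λf, where λ is the m-th eigenvalue of H(G';α), f_i ≠ 0, and α = f_j/f_i. Then B(i,j;α)f = 0, f is an eigenvector of H(G) with eigenvalue λ, and λ occupies a position n in the nondecreasing spectrum of H(G) with n ∈ {m−1, m, m+1}. (ii) Conversely, if f^{(n)} is a non-degenerate eigenvector of H(G) then, with α⁺ = f^{(n)}_j/f^{(n)}_i, the vector f^{(n)} is an eigenvector of H(G';α⁺) with eigenvalue λ_n(G), and this eigenvalue occupies a position m in the spectrum of H(G';α⁺) with n ∈ {m−1, m, m+1}. -/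
/-!
Since `α = f j / f i`, the vector `f` lies in the hyperplane `α x_i = x_j`, which `B(i,j;α)`
annihilates; so `f` is a common eigenvector of `H(G)` and `H(G';α)`. The two operators agree on
that hyperplane, hence so do their quadratic forms, and a min–max dimension count shows that the
number of eigenvalues below any level `t` differs by at most one between them. For a common
eigenvalue this places it at positions at most one apart in the two sorted spectra.
-/

open Matrix

lemma Ham_isHermitian {V : ℕ} (G : SimpleGraph (Fin V)) (q : Fin V → ℝ) :
    (Ham G q).IsHermitian := by
  classical
  unfold Matrix.IsHermitian
  ext a b
  simp only [Matrix.conjTranspose_apply, Ham, Matrix.of_apply, star_trivial]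
  by_cases h : a = b
  · subst h; simp
  · simp [h, Ne.symm h, SimpleGraph.adj_comm]

lemma Bmat_isHermitian {V : ℕ} (i j : Fin V) (α : ℝ) : (Bmat i j α).IsHermitian := by
  unfold Matrix.IsHermitian
  ext a b
  simp only [Matrix.conjTranspose_apply, Bmat, Matrix.of_apply, star_trivial]
  by_cases hai : a = i <;> by_cases haj : a = j <;> by_cases hbi : b = i <;>
    by_cases hbj : b = j <;> simp [hai, haj, hbi, hbj]

/-- The eigenvalues of a Hermitian matrix, sorted in nondecreasing order and
counted with multiplicity; `sortedEigs hM k` is the `(k+1)`-st smallest eigenvalue. -/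
noncomputable def sortedEigs {n : ℕ} {M : Matrix (Fin n) (Fin n) ℝ} (hM : M.IsHermitian) :
    Fin n → ℝ :=
  hM.eigenvalues ∘ Tuple.sort hM.eigenvalues

open Finset Module Filter Topology
open scoped InnerProductSpace

section OrthonormalEigenbasis

variable {E : Type*} [NormedAddCommGroup E] [InnerProductSpace ℝ E] {ι : Type*} [Fintype ι]
  (b : OrthonormalBasis ι ℝ E) {T : E →ₗ[ℝ] E} {μ : ι → ℝ}

theorem OrthonormalBasis.inner_apply_self_eq_sum (hT : ∀ k, T (b k) = μ k • b k) (x : E) :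
    ⟪x, T x⟫_ℝ = ∑ k, μ k * ⟪b k, x⟫_ℝ ^ 2 := by
  conv_lhs => rw [← b.sum_repr' x, map_sum]
  simp only [map_smul, hT, inner_sum, inner_smul_right, b.sum_repr']
  refine Finset.sum_congr rfl fun k _ => ?_
  rw [real_inner_comm]
  ring

theorem OrthonormalBasis.inner_eq_zero_of_mem_span_image {s : Set ι} {x : E}
    (hx : x ∈ Submodule.span ℝ (b '' s)) {k : ι} (hk : k ∉ s) : ⟪b k, x⟫_ℝ = 0 := by
  obtain ⟨l, hl, rfl⟩ := (Finsupp.mem_span_image_iff_linearCombination ℝ).1 hx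
  rw [real_inner_comm]
  exact b.orthonormal.inner_finsupp_eq_zero hk hl

theorem OrthonormalBasis.finrank_span_image (p : ι → Prop) [DecidablePred p] :
    finrank ℝ (Submodule.span ℝ (b '' {k | p k})) = #{k | p k} := by
  rw [← Fintype.card_subtype, ← finrank_span_eq_card
    (b.orthonormal.linearIndependent.comp _ Subtype.val_injective), Set.range_comp,
    Subtype.range_coe_subtype]

theorem OrthonormalBasis.norm_sq_eq_sum (x : E) : ‖x‖ ^ 2 = ∑ k, ⟪b k, x⟫_ℝ ^ 2 := by
  simp only [← b.sum_sq_norm_inner_right x, Real.norm_eq_abs, sq_abs]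

theorem OrthonormalBasis.inner_apply_self_lt_of_mem_span (hT : ∀ k, T (b k) = μ k • b k)
    {t : ℝ} {x : E} (hx : x ∈ Submodule.span ℝ (b '' {k | μ k < t})) (hx0 : x ≠ 0) :
    ⟪x, T x⟫_ℝ < t * ‖x‖ ^ 2 := by
  have hzero : ∀ k, ¬ μ k < t → ⟪b k, x⟫_ℝ = 0 := fun k hk =>
    b.inner_eq_zero_of_mem_span_image hx hk
  obtain ⟨k₀, hk₀⟩ : ∃ k, ⟪b k, x⟫_ℝ ≠ 0 := by
    by_contra! h
    exact hx0 (by simpa [h] using (b.sum_repr' x).symm)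
  have hμk₀ : μ k₀ < t := by_contra fun h => hk₀ (hzero k₀ h)
  rw [b.inner_apply_self_eq_sum hT, b.norm_sq_eq_sum, mul_sum]
  refine Finset.sum_lt_sum (fun k _ => ?_) ⟨k₀, mem_univ _, ?_⟩
  · by_cases hk : μ k < t
    · exact mul_le_mul_of_nonneg_right hk.le (sq_nonneg _)
    · simp [hzero k hk]
  · exact mul_lt_mul_of_pos_right hμk₀ (pow_pos (abs_pos.2 hk₀) 2 |>.trans_eq (sq_abs _))

theorem OrthonormalBasis.le_inner_apply_self_of_mem_span (hT : ∀ k, T (b k) = μ k • b k)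
    {t : ℝ} {x : E} (hx : x ∈ Submodule.span ℝ (b '' {k | ¬ μ k < t})) :
    t * ‖x‖ ^ 2 ≤ ⟪x, T x⟫_ℝ := by
  rw [b.inner_apply_self_eq_sum hT, b.norm_sq_eq_sum, mul_sum]
  refine Finset.sum_le_sum fun k _ => ?_
  by_cases hk : μ k < t
  · simp [b.inner_eq_zero_of_mem_span_image hx (not_not.2 hk)]
  · exact mul_le_mul_of_nonneg_right (not_lt.1 hk) (sq_nonneg _)

end OrthonormalEigenbasis

theorem card_lt_le_card_lt_add_one_of_inner_eq {E : Type*} [NormedAddCommGroup E]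
    [InnerProductSpace ℝ E] [FiniteDimensional ℝ E] {ι₁ ι₂ : Type*} [Fintype ι₁] [Fintype ι₂]
    {b₁ : OrthonormalBasis ι₁ ℝ E} {b₂ : OrthonormalBasis ι₂ ℝ E} {T₁ T₂ : E →ₗ[ℝ] E}
    {μ₁ : ι₁ → ℝ} {μ₂ : ι₂ → ℝ} (h₁ : ∀ k, T₁ (b₁ k) = μ₁ k • b₁ k)
    (h₂ : ∀ k, T₂ (b₂ k) = μ₂ k • b₂ k) {K : Submodule ℝ E}
    (hK : finrank ℝ E ≤ finrank ℝ K + 1) (hT : ∀ x ∈ K, ⟪x, T₁ x⟫_ℝ = ⟪x, T₂ x⟫_ℝ) (t : ℝ) :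
    #{k | μ₁ k < t} ≤ #{k | μ₂ k < t} + 1 := by
  set W := Submodule.span ℝ (b₁ '' {k | μ₁ k < t})
  set U := Submodule.span ℝ (b₂ '' {k | ¬ μ₂ k < t})
  have hdisj : Disjoint (W ⊓ K) U := by
    refine Submodule.disjoint_def.2 fun x hx hxU => by_contra fun hx0 => ?_
    have hlt := b₁.inner_apply_self_lt_of_mem_span h₁ (Submodule.mem_inf.1 hx).1 hx0
    have hle := b₂.le_inner_apply_self_of_mem_span h₂ hxU
    rw [hT x (Submodule.mem_inf.1 hx).2] at hlt
    exact hlt.not_ge hle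
  have hWU := Submodule.finrank_add_finrank_le_of_disjoint hdisj
  have hWK := Submodule.finrank_sup_add_finrank_inf_eq W K
  have hsup := Submodule.finrank_le (W ⊔ K)
  have hcard := card_filter_add_card_filter_not (s := univ) fun k => μ₂ k < t
  rw [card_univ, ← finrank_eq_card_basis b₂.toBasis] at hcard
  rw [b₁.finrank_span_image] at hWK
  rw [b₂.finrank_span_image] at hWU
  omega

theorem Module.Dual.finrank_le_finrank_ker_add_one {K V : Type*} [Field K] [AddCommGroup V]
    [Module K V] [FiniteDimensional K V] (φ : Module.Dual K V) :
    finrank K V ≤ finrank K (LinearMap.ker φ) + 1 := by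
  have hrange := Submodule.finrank_le (LinearMap.range φ)
  rw [finrank_self] at hrange
  have := LinearMap.finrank_range_add_finrank_ker φ
  omega

namespace Matrix.IsHermitian

variable {n : Type*} [Fintype n] [DecidableEq n] {A B : Matrix n n ℝ}

theorem toLpLin_eigenvectorBasis (hA : A.IsHermitian) (k : n) :
    toLpLin 2 2 A (hA.eigenvectorBasis k) = hA.eigenvalues k • hA.eigenvectorBasis k := by
  rw [toLpLin_apply, hA.mulVec_eigenvectorBasis]
  rfl

theorem card_eigenvalues_lt_le_add_one (hA : A.IsHermitian) (hB : B.IsHermitian)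
    (φ : Module.Dual ℝ (n → ℝ)) (h : ∀ x, φ x = 0 → A *ᵥ x = B *ᵥ x) (t : ℝ) :
    #{k | hA.eigenvalues k < t} ≤ #{k | hB.eigenvalues k < t} + 1 := by
  let φE : Module.Dual ℝ (EuclideanSpace ℝ n) := φ ∘ₗ (WithLp.linearEquiv 2 ℝ (n → ℝ)).toLinearMap
  refine card_lt_le_card_lt_add_one_of_inner_eq hA.toLpLin_eigenvectorBasis
    hB.toLpLin_eigenvectorBasis φE.finrank_le_finrank_ker_add_one (fun x hx => ?_) t
  rw [toLpLin_apply, toLpLin_apply, h x.ofLp hx]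

theorem mem_range_eigenvalues_of_mulVec_eq (hA : A.IsHermitian) {f : n → ℝ} (hf : f ≠ 0)
    {μ : ℝ} (h : A *ᵥ f = μ • f) : μ ∈ Set.range hA.eigenvalues := by
  rw [← hA.spectrum_real_eq_range_eigenvalues, spectrum.mem_iff, Matrix.isUnit_iff_isUnit_det,
    isUnit_iff_ne_zero, not_not, ← exists_mulVec_eq_zero_iff]
  exact ⟨f, hf, by simp [sub_mulVec, h, Algebra.algebraMap_eq_smul_one, smul_mulVec]⟩

end Matrix.IsHermitian

theorem Monotone.apply_lt_iff_lt_card {α : Type*} [LinearOrder α] {N : ℕ} {f : Fin N → α}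
    (hf : Monotone f) (m : Fin N) (t : α) : f m < t ↔ (m : ℕ) < #{k | f k < t} := by
  constructor
  · intro hm
    have hsub : Iic m ⊆ ({k | f k < t} : Finset (Fin N)) := fun k hk =>
      mem_filter.2 ⟨mem_univ _, (hf (mem_Iic.1 hk)).trans_lt hm⟩
    simpa using card_le_card hsub
  · intro hm
    by_contra! htm
    have hsub : ({k | f k < t} : Finset (Fin N)) ⊆ Iio m := fun k hk =>
      mem_Iio.2 (lt_of_not_ge fun hmk => (htm.trans (hf hmk)).not_gt (mem_filter.1 hk).2)
    have := card_le_card hsub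
    simp only [Fin.card_Iio] at this
    omega

theorem Tuple.sort_lt_iff {α : Type*} [LinearOrder α] {N : ℕ} (ν : Fin N → α) (m : Fin N)
    (t : α) : (ν ∘ Tuple.sort ν) m < t ↔ (m : ℕ) < #{k | ν k < t} := by
  rw [(Tuple.monotone_sort ν).apply_lt_iff_lt_card]
  congr! 1
  exact card_equiv (Tuple.sort ν) (by simp)

theorem eventually_forall_lt_iff_le {ι : Type*} [Finite ι] (ν : ι → ℝ) (t : ℝ) :
    ∀ᶠ s in 𝓝[>] t, ∀ k, ν k < s ↔ ν k ≤ t := by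
  refine eventually_all.2 fun k => ?_
  rcases le_or_gt (ν k) t with hk | hk
  · exact eventually_nhdsWithin_of_forall fun s hs => iff_of_true (hk.trans_lt hs) hk
  · filter_upwards [Ioo_mem_nhdsGT hk] with s hs
    exact iff_of_false (hs.2.le.not_gt ·) hk.not_ge

theorem Tuple.exists_sort_eq_of_card_lt_le {N : ℕ} {ν₁ ν₂ : Fin N → ℝ}
    (h₁₂ : ∀ t, #{k | ν₁ k < t} ≤ #{k | ν₂ k < t} + 1)
    (h₂₁ : ∀ t, #{k | ν₂ k < t} ≤ #{k | ν₁ k < t} + 1) {μ : ℝ} (hμ : μ ∈ Set.range ν₁)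
    (m : Fin N) (hm : (ν₂ ∘ Tuple.sort ν₂) m = μ) :
    ∃ n : Fin N, (ν₁ ∘ Tuple.sort ν₁) n = μ ∧
      ((n : ℕ) + 1 = (m : ℕ) ∨ (n : ℕ) = (m : ℕ) ∨ (n : ℕ) = (m : ℕ) + 1) := by
  -- above `μ` and below `s` neither tuple takes a value, so `< s` counts the values `≤ μ`
  obtain ⟨s, hs₁, hs₂⟩ := ((eventually_forall_lt_iff_le ν₁ μ).and
    (eventually_forall_lt_iff_le ν₂ μ)).exists
  have hle₁ : ∀ n, (ν₁ ∘ Tuple.sort ν₁) n ≤ μ ↔ (n : ℕ) < #{k | ν₁ k < s} := fun n => by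
    rw [← Tuple.sort_lt_iff, Function.comp_apply, hs₁]
  have hm₂ : ¬ (m : ℕ) < #{k | ν₂ k < μ} := by rw [← Tuple.sort_lt_iff, hm]; exact lt_irrefl μ
  have hm₂' : (m : ℕ) < #{k | ν₂ k < s} := by
    rw [← Tuple.sort_lt_iff, Function.comp_apply, hs₂]; exact hm.le
  obtain ⟨p, hp⟩ : ∃ p, (ν₁ ∘ Tuple.sort ν₁) p = μ := by
    obtain ⟨k, rfl⟩ := hμ
    exact ⟨(Tuple.sort ν₁).symm k, by simp⟩
  have hp₁ : ¬ (p : ℕ) < #{k | ν₁ k < μ} := by rw [← Tuple.sort_lt_iff, hp]; exact lt_irrefl μ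
  have hp₁' : (p : ℕ) < #{k | ν₁ k < s} := (hle₁ p).1 hp.le
  have hN : #{k | ν₁ k < s} ≤ N := (card_filter_le _ _).trans_eq (card_fin N)
  have h₁ := h₁₂ μ
  have h₂ := h₂₁ s
  obtain ⟨n, hn⟩ : ∃ n : Fin N, (n : ℕ) = max #{k | ν₁ k < μ} (m - 1) := ⟨⟨_, by omega⟩, rfl⟩
  refine ⟨n, le_antisymm ((hle₁ n).2 (by omega)) ?_, by omega⟩
  rw [← not_lt, Tuple.sort_lt_iff]
  omega

theorem Matrix.IsHermitian.exists_sortedEigs_eq {N : ℕ} {A B : Matrix (Fin N) (Fin N) ℝ}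
    (hA : A.IsHermitian) (hB : B.IsHermitian) (φ : Module.Dual ℝ (Fin N → ℝ))
    (h : ∀ x, φ x = 0 → A *ᵥ x = B *ᵥ x) {f : Fin N → ℝ} (hf : f ≠ 0) (m : Fin N)
    (hAf : A *ᵥ f = sortedEigs hB m • f) :
    ∃ n : Fin N, sortedEigs hA n = sortedEigs hB m ∧
      ((n : ℕ) + 1 = (m : ℕ) ∨ (n : ℕ) = (m : ℕ) ∨ (n : ℕ) = (m : ℕ) + 1) :=
  Tuple.exists_sort_eq_of_card_lt_le (hA.card_eigenvalues_lt_le_add_one hB φ h)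
    (hB.card_eigenvalues_lt_le_add_one hA φ fun x hx => (h x hx).symm)
    (hA.mem_range_eigenvalues_of_mulVec_eq hf hAf) m rfl

theorem Bmat_mulVec_eq_zero {V : ℕ} {i j : Fin V} (hij : i ≠ j) {α : ℝ} (hα : α ≠ 0)
    {v : Fin V → ℝ} (hv : α * v i = v j) : Bmat i j α *ᵥ v = 0 := by
  ext a
  by_cases hai : a = i
  · subst hai
    simp [Bmat, mulVec, dotProduct, add_mul, sum_add_distrib, hij, ← hv]
  · by_cases haj : a = j
    · subst haj
      simp [Bmat, mulVec, dotProduct, add_mul, sum_add_distrib, hai, ← hv, neg_div,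
        inv_mul_cancel_left₀ hα]
    · simp [Bmat, mulVec, dotProduct, hai, haj]

theorem stmt_4_general {V : ℕ} (G : SimpleGraph (Fin V)) (q : Fin V → ℝ)
    (i j : Fin V) (hij : G.Adj i j) :
    (∀ (α : ℝ), α ≠ 0 → ∀ (f : Fin V → ℝ) (m : Fin V),
      (∑ v, f v ^ 2 = 1) → f i ≠ 0 → α = f j / f i →
      (Ham G q + Bmat i j α) *ᵥ f
          = sortedEigs ((Ham_isHermitian G q).add (Bmat_isHermitian i j α)) m • f →
      Bmat i j α *ᵥ f = 0 ∧
      Ham G q *ᵥ f = sortedEigs ((Ham_isHermitian G q).add (Bmat_isHermitian i j α)) m • f ∧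
      ∃ n : Fin V,
        sortedEigs (Ham_isHermitian G q) n
            = sortedEigs ((Ham_isHermitian G q).add (Bmat_isHermitian i j α)) m ∧
        ((n : ℕ) + 1 = (m : ℕ) ∨ (n : ℕ) = (m : ℕ) ∨ (n : ℕ) = (m : ℕ) + 1)) ∧
    (∀ (f : Fin V → ℝ) (n : Fin V),
      Ham G q *ᵥ f = sortedEigs (Ham_isHermitian G q) n • f →
      (∀ v, f v ≠ 0) →
      (∀ k : Fin V, sortedEigs (Ham_isHermitian G q) k = sortedEigs (Ham_isHermitian G q) n
        → k = n) →
      (Ham G q + Bmat i j (f j / f i)) *ᵥ f = sortedEigs (Ham_isHermitian G q) n • f ∧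
      ∃ m : Fin V,
        sortedEigs ((Ham_isHermitian G q).add (Bmat_isHermitian i j (f j / f i))) m
            = sortedEigs (Ham_isHermitian G q) n ∧
        ((n : ℕ) + 1 = (m : ℕ) ∨ (n : ℕ) = (m : ℕ) ∨ (n : ℕ) = (m : ℕ) + 1)) := by
  have hagree : ∀ {α : ℝ}, α ≠ 0 → ∀ x,
      (α • LinearMap.proj i - LinearMap.proj j : Module.Dual ℝ (Fin V → ℝ)) x = 0 →
      Ham G q *ᵥ x = (Ham G q + Bmat i j α) *ᵥ x := fun hα x hx => by
    rw [add_mulVec, Bmat_mulVec_eq_zero hij.ne hα (sub_eq_zero.1 hx), add_zero]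
  refine ⟨fun α hα f m _ hfi hα_eq hf => ?_, fun f n hf hf0 _ => ?_⟩
  · have hBf : Bmat i j α *ᵥ f = 0 :=
      Bmat_mulVec_eq_zero hij.ne hα (by rw [hα_eq, div_mul_cancel₀ _ hfi])
    rw [add_mulVec, hBf, add_zero] at hf
    exact ⟨hBf, hf, (Ham_isHermitian G q).exists_sortedEigs_eq _ _ (hagree hα)
      (fun h => hfi (congrFun h i)) m hf⟩
  · have hα : f j / f i ≠ 0 := div_ne_zero (hf0 j) (hf0 i)
    have hHBf : (Ham G q + Bmat i j (f j / f i)) *ᵥ f = sortedEigs (Ham_isHermitian G q) n • f := by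
      rw [← hagree hα f (by simp [div_mul_cancel₀ _ (hf0 i)]), hf]
    obtain ⟨m, hm, hnm⟩ := ((Ham_isHermitian G q).add (Bmat_isHermitian i j _)).exists_sortedEigs_eq
      (Ham_isHermitian G q) _ (fun x hx => (hagree hα x hx).symm) (fun h => hf0 i (congrFun h i))
      n hHBf
    exact ⟨hHBf, m, hm, by omega⟩

/-- (i) If for some `α ≠ 0` a normalized vector `f` with `f i ≠ 0` and
`α = f j / f i` is an eigenvector of `H(G';α) = H(G) + B(i,j;α)` for its `m`-th eigenvalue,
then `B(i,j;α) f = 0`, `f` is an eigenvector of `H(G)` with the same eigenvalue, and this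
eigenvalue occupies a position `n ∈ {m-1, m, m+1}` in the spectrum of `H(G)`.
(ii) Conversely, a non-degenerate eigenvector `f⁽ⁿ⁾` of `H(G)` is, with `α⁺ = f j / f i`, an
eigenvector of `H(G';α⁺)` with eigenvalue `λ_n(G)`, occupying a position `m` in the spectrum
of `H(G';α⁺)` with `n ∈ {m-1, m, m+1}`. (Positions are indexed from `0` here, so the `m`-th
eigenvalue of the paper is `sortedEigs _ m` with `(m : ℕ)` equal to paper-`m` minus one.) -/
theorem stmt_4 {V : ℕ} (G : SimpleGraph (Fin V)) (hG : G.Connected) (q : Fin V → ℝ)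
    (i j : Fin V) (hij : G.Adj i j) :
    (∀ (α : ℝ), α ≠ 0 → ∀ (f : Fin V → ℝ) (m : Fin V),
      (∑ v, f v ^ 2 = 1) → f i ≠ 0 → α = f j / f i →
      (Ham G q + Bmat i j α) *ᵥ f
          = sortedEigs ((Ham_isHermitian G q).add (Bmat_isHermitian i j α)) m • f →
      Bmat i j α *ᵥ f = 0 ∧
      Ham G q *ᵥ f = sortedEigs ((Ham_isHermitian G q).add (Bmat_isHermitian i j α)) m • f ∧
      ∃ n : Fin V,
        sortedEigs (Ham_isHermitian G q) n
            = sortedEigs ((Ham_isHermitian G q).add (Bmat_isHermitian i j α)) m ∧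
        ((n : ℕ) + 1 = (m : ℕ) ∨ (n : ℕ) = (m : ℕ) ∨ (n : ℕ) = (m : ℕ) + 1)) ∧
    (∀ (f : Fin V → ℝ) (n : Fin V),
      Ham G q *ᵥ f = sortedEigs (Ham_isHermitian G q) n • f →
      (∀ v, f v ≠ 0) →
      (∀ k : Fin V, sortedEigs (Ham_isHermitian G q) k = sortedEigs (Ham_isHermitian G q) n
        → k = n) →
      (Ham G q + Bmat i j (f j / f i)) *ᵥ f = sortedEigs (Ham_isHermitian G q) n • f ∧
      ∃ m : Fin V,
        sortedEigs ((Ham_isHermitian G q).add (Bmat_isHermitian i j (f j / f i))) m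
            = sortedEigs (Ham_isHermitian G q) n ∧
        ((n : ℕ) + 1 = (m : ℕ) ∨ (n : ℕ) = (m : ℕ) ∨ (n : ℕ) = (m : ℕ) + 1)) :=
  stmt_4_general G q i j hij
end

section
/- Let f^{(n)} be a non-degenerate eigenvector of H(G) corresponding to λ_n(G), and let ν_n, ℓ_n denote the number of nodal domains and the number of constant-sign cycles of f^{(n)}. Then n − (β(G) − ℓ_n) ≤ ν_n ≤ n. -/
open Matrix

/-- The spanning subgraph of `G` retaining exactly the edges `(a,b)` with `f a * f b > 0`.
Its connected components are the nodal domains of `f`. -/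
def posSub {V : ℕ} (G : SimpleGraph (Fin V)) (f : Fin V → ℝ) : SimpleGraph (Fin V) where
  Adj a b := G.Adj a b ∧ 0 < f a * f b
  symm := ⟨fun a b h => ⟨h.1.symm, by rw [mul_comm]; exact h.2⟩⟩
  loopless := ⟨fun a h => G.irrefl h.1⟩

/-- `ν(G;f)`: the number of nodal domains of `f` on `G`. -/
noncomputable def nodalCount {V : ℕ} (G : SimpleGraph (Fin V)) (f : Fin V → ℝ) : ℕ :=
  Nat.card (posSub G f).ConnectedComponent

/-- `φ(G;f)`: the number of edges of `G` along which `f` changes sign. -/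
noncomputable def flipCount {V : ℕ} (G : SimpleGraph (Fin V)) (f : Fin V → ℝ) : ℕ :=
  {e ∈ G.edgeSet | ∃ a b, e = s(a, b) ∧ f a * f b < 0}.ncard

/-- The number of vertices of the connected component `c` of the graph `H`. -/
noncomputable def compVerts {V : ℕ} (H : SimpleGraph (Fin V)) (c : H.ConnectedComponent) : ℕ :=
  Nat.card {v : Fin V // H.connectedComponentMk v = c}

/-- The number of edges of the connected component `c` of the graph `H`. -/
noncomputable def compEdges {V : ℕ} (H : SimpleGraph (Fin V)) (c : H.ConnectedComponent) : ℕ :=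
  {e ∈ H.edgeSet | ∀ v ∈ e, H.connectedComponentMk v = c}.ncard

/-- `ℓ(G;f)`: the sum over the nodal domains of `f` of their first Betti numbers
`E_k - V_k + 1`, i.e. the number of independent cycles on which `f` has constant sign. -/
noncomputable def cycleCount {V : ℕ} (G : SimpleGraph (Fin V)) (f : Fin V → ℝ) : ℕ :=
  ∑ᶠ c : (posSub G f).ConnectedComponent,
    (compEdges (posSub G f) c + 1 - compVerts (posSub G f) c)

/-- The first Betti number `β(G) = E - V + 1` of the graph `G` (as an integer). -/
noncomputable def betti {V : ℕ} (G : SimpleGraph (Fin V)) : ℤ :=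
  (G.edgeSet.ncard : ℤ) - V + 1

/-! Put `M = H - λₙ`, so that `M f = 0`. The ground-state transform gives
`2 ⟨f u, M (f u)⟩ = ∑_{a ~ b} f_a f_b (u_a - u_b)²`. This is `≤ 0` when `u` is constant on nodal
domains (a space of dimension `ν`), and `≥ 0` when `u` is constant across the `φ` sign-changing
edges (a space of dimension `≥ V - φ`). Since `λₙ` is simple, there are exactly `n` eigenvalues
`≤ λₙ` and `V - n + 1` eigenvalues `≥ λₙ`, so comparing dimensions gives `ν ≤ n` and `n - 1 ≤ φ`.
Finally `E = E⁺ + φ`, where `E⁺` counts the edges inside nodal domains, and `ℓ = E⁺ - V + ν`,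
so `β - ℓ = φ - ν + 1`. -/

section Spectral
variable {n : Type*} [Fintype n]

lemma dotProduct_mulVec_conj_diagonal [DecidableEq n] (U : Matrix n n ℝ) (d x : n → ℝ) :
    x ⬝ᵥ ((U * diagonal d * Uᵀ) *ᵥ x) = ∑ k, d k * (Uᵀ *ᵥ x) k ^ 2 := by
  rw [← mulVec_mulVec, ← mulVec_mulVec, dotProduct_mulVec, ← mulVec_transpose]
  simp only [dotProduct, mulVec_diagonal]
  exact Finset.sum_congr rfl fun k _ => by ring

lemma finrank_le_card_nonpos_of_sum_nonpos {P : Matrix n n ℝ} (hP : Function.Injective P.mulVec)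
    (w : n → ℝ) (W : Submodule ℝ (n → ℝ)) (hW : ∀ x ∈ W, ∑ k, w k * (P *ᵥ x) k ^ 2 ≤ 0) :
    Module.finrank ℝ W ≤ Fintype.card {k // w k ≤ 0} := by
  let Ψ : W →ₗ[ℝ] ({k // w k ≤ 0} → ℝ) :=
    (LinearMap.pi fun k => LinearMap.proj k.1) ∘ₗ P.mulVecLin ∘ₗ W.subtype
  suffices Function.Injective Ψ by
    simpa using LinearMap.finrank_le_finrank_of_injective this
  rw [← LinearMap.ker_eq_bot, Submodule.eq_bot_iff]
  rintro ⟨x, hx⟩ hΨ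
  have hneg : ∀ k, w k ≤ 0 → (P *ᵥ x) k = 0 := fun k hk => congrFun hΨ ⟨k, hk⟩
  have hpos : ∀ k, 0 < w k → (P *ᵥ x) k = 0 := by
    have hterm : ∀ k, 0 ≤ w k * (P *ᵥ x) k ^ 2 := fun k => by
      rcases le_or_gt (w k) 0 with hk | hk
      · simp [hneg k hk]
      · positivity
    have hzero := (Finset.sum_eq_zero_iff_of_nonneg fun k _ => hterm k).mp
      ((hW x hx).antisymm (Finset.sum_nonneg fun k _ => hterm k))
    intro k hk
    simpa [hk.ne'] using hzero k (Finset.mem_univ k)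
  have : P *ᵥ x = P *ᵥ 0 := by
    ext k
    rw [mulVec_zero]
    exact (le_or_gt (w k) 0).elim (hneg k) (hpos k)
  simpa using hP this

namespace Matrix.IsHermitian
variable [DecidableEq n] {M : Matrix n n ℝ} (hM : M.IsHermitian)

lemma eigenvectorUnitary_mul_transpose :
    (hM.eigenvectorUnitary : Matrix n n ℝ) * (hM.eigenvectorUnitary : Matrix n n ℝ)ᵀ = 1 := by
  simpa [star_eq_conjTranspose] using Unitary.coe_mul_star_self hM.eigenvectorUnitary

lemma sub_smul_one_eq (c : ℝ) :
    M - c • 1 = (hM.eigenvectorUnitary : Matrix n n ℝ) *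
      diagonal (fun k => hM.eigenvalues k - c) * (hM.eigenvectorUnitary : Matrix n n ℝ)ᵀ := by
  set U : Matrix n n ℝ := ↑hM.eigenvectorUnitary
  have hspec : M = U * diagonal hM.eigenvalues * Uᵀ := by
    simpa [U, Unitary.conjStarAlgAut_apply, star_eq_conjTranspose] using hM.spectral_theorem
  have hdiag : diagonal (fun k => hM.eigenvalues k - c) = diagonal hM.eigenvalues - c • 1 := by
    ext i j; by_cases h : i = j <;> simp [h, diagonal]
  rw [hdiag, mul_sub, sub_mul, ← hspec, mul_smul_comm, mul_one, smul_mul_assoc,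
    hM.eigenvectorUnitary_mul_transpose]

lemma injective_transpose_eigenvectorUnitary_mulVec :
    Function.Injective (hM.eigenvectorUnitary : Matrix n n ℝ)ᵀ.mulVec := by
  intro x y h
  simpa [mulVec_mulVec, hM.eigenvectorUnitary_mul_transpose] using
    congrArg (hM.eigenvectorUnitary : Matrix n n ℝ).mulVec h

lemma finrank_le_card_eigenvalues_le (c : ℝ) (W : Submodule ℝ (n → ℝ))
    (hW : ∀ x ∈ W, x ⬝ᵥ ((M - c • 1) *ᵥ x) ≤ 0) :
    Module.finrank ℝ W ≤ Fintype.card {k // hM.eigenvalues k ≤ c} := by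
  have := finrank_le_card_nonpos_of_sum_nonpos hM.injective_transpose_eigenvectorUnitary_mulVec
    (fun k => hM.eigenvalues k - c) W fun x hx => by
      simpa [← dotProduct_mulVec_conj_diagonal, ← hM.sub_smul_one_eq] using hW x hx
  simpa [sub_nonpos] using this

lemma finrank_le_card_le_eigenvalues (c : ℝ) (W : Submodule ℝ (n → ℝ))
    (hW : ∀ x ∈ W, 0 ≤ x ⬝ᵥ ((M - c • 1) *ᵥ x)) :
    Module.finrank ℝ W ≤ Fintype.card {k // c ≤ hM.eigenvalues k} := by
  have := finrank_le_card_nonpos_of_sum_nonpos hM.injective_transpose_eigenvectorUnitary_mulVec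
    (fun k => c - hM.eigenvalues k) W fun x hx => by
      have := hW x hx
      rw [hM.sub_smul_one_eq, dotProduct_mulVec_conj_diagonal] at this
      simp only [← neg_sub (hM.eigenvalues _) c, neg_mul, Finset.sum_neg_distrib]
      linarith
  simpa [sub_nonpos] using this

end Matrix.IsHermitian
end Spectral

section SortedEigenvalues
variable {α β : Type*} [LinearOrder α] [LinearOrder β] {g : α → β} {a : α}

lemma Monotone.apply_le_apply_iff_of_eq_imp (hg : Monotone g) (ha : ∀ k, g k = g a → k = a)
    (k : α) : g k ≤ g a ↔ k ≤ a :=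
  ⟨fun h => not_lt.1 fun hlt => hlt.ne' (ha k (le_antisymm h (hg hlt.le))), fun h => hg h⟩

lemma Monotone.apply_le_apply_iff_of_eq_imp' (hg : Monotone g) (ha : ∀ k, g k = g a → k = a)
    (k : α) : g a ≤ g k ↔ a ≤ k :=
  ⟨fun h => not_lt.1 fun hlt => hlt.ne (ha k (le_antisymm (hg hlt.le) h)), fun h => hg h⟩

variable {V : ℕ} {M : Matrix (Fin V) (Fin V) ℝ} (hM : M.IsHermitian)

lemma card_eigenvalues_eq_card_sortedEigs (p : ℝ → Prop) [DecidablePred p] :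
    Fintype.card {k // p (hM.eigenvalues k)} = Fintype.card {k // p (sortedEigs hM k)} :=
  Fintype.card_congr ((Tuple.sort hM.eigenvalues).subtypeEquiv fun _ => Iff.rfl).symm

lemma card_eigenvalues_le_sortedEigs {n : Fin V}
    (hn : ∀ k, sortedEigs hM k = sortedEigs hM n → k = n) :
    Fintype.card {k // hM.eigenvalues k ≤ sortedEigs hM n} = n + 1 := by
  rw [card_eigenvalues_eq_card_sortedEigs hM (· ≤ sortedEigs hM n), Fintype.card_subtype]
  have hmono : Monotone (sortedEigs hM) := Tuple.monotone_sort hM.eigenvalues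
  simp only [hmono.apply_le_apply_iff_of_eq_imp hn]
  rw [Finset.filter_ge_eq_Iic, Fin.card_Iic]

lemma card_sortedEigs_le_eigenvalues {n : Fin V}
    (hn : ∀ k, sortedEigs hM k = sortedEigs hM n → k = n) :
    Fintype.card {k // sortedEigs hM n ≤ hM.eigenvalues k} = V - n := by
  rw [card_eigenvalues_eq_card_sortedEigs hM (sortedEigs hM n ≤ ·), Fintype.card_subtype]
  have hmono : Monotone (sortedEigs hM) := Tuple.monotone_sort hM.eigenvalues
  simp only [hmono.apply_le_apply_iff_of_eq_imp' hn]
  rw [Finset.filter_le_eq_Ici, Fin.card_Ici]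

end SortedEigenvalues

lemma Matrix.IsSymm.two_mul_dotProduct_mul_mulVec {R n : Type*} [CommRing R] [Fintype n]
    {M : Matrix n n R} (hM : M.IsSymm) {f : n → R} (hf : M *ᵥ f = 0) (u : n → R) :
    2 * ((f * u) ⬝ᵥ (M *ᵥ (f * u))) = -∑ a, ∑ b, M a b * (f a * f b) * (u a - u b) ^ 2 := by
  have hrow : ∀ a, ∑ b, M a b * f b = 0 := fun a => by
    simpa [mulVec, dotProduct] using congrFun hf a
  -- expanding `(u a - u b)^2`, the square terms vanish because `M f = 0`
  have hsq : ∑ a, ∑ b, M a b * (f a * f b) * (u a ^ 2 + u b ^ 2) = 0 := by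
    have h1 : ∀ a, ∑ b, M a b * (f a * f b) * u a ^ 2 = 0 := fun a => by
      simp only [fun b => show M a b * (f a * f b) * u a ^ 2 = f a * u a ^ 2 * (M a b * f b) by
        ring, ← Finset.mul_sum, hrow, mul_zero]
    have h2 : ∀ b, ∑ a, M a b * (f a * f b) * u b ^ 2 = 0 := fun b => by
      simp only [fun a => show M a b * (f a * f b) * u b ^ 2 = f b * u b ^ 2 * (M b a * f a) by
        rw [hM.apply]; ring, ← Finset.mul_sum, hrow, mul_zero]
    simp only [mul_add, Finset.sum_add_distrib, Finset.sum_eq_zero fun a _ => h1 a]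
    rw [Finset.sum_comm, Finset.sum_eq_zero fun b _ => h2 b, add_zero]
  have hcross : (f * u) ⬝ᵥ (M *ᵥ (f * u)) = ∑ a, ∑ b, M a b * (f a * f b) * (u a * u b) := by
    simp only [dotProduct, mulVec, Finset.mul_sum, Pi.mul_apply]
    exact Finset.sum_congr rfl fun a _ => Finset.sum_congr rfl fun b _ => by ring
  rw [hcross, ← sub_eq_zero, ← hsq]
  simp only [Finset.mul_sum, ← Finset.sum_neg_distrib, ← Finset.sum_sub_distrib]
  exact Finset.sum_congr rfl fun a _ => Finset.sum_congr rfl fun b _ => by ring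

lemma Ham_sub_smul_one_isSymm {V : ℕ} (G : SimpleGraph (Fin V)) (q : Fin V → ℝ) (c : ℝ) :
    (Ham G q - c • 1).IsSymm :=
  isHermitian_iff_isSymm.mp ((Ham_isHermitian G q).sub (isHermitian_one.smul (.all c)))

open Classical in
lemma two_mul_dotProduct_mul_Ham_sub_mulVec {V : ℕ} {G : SimpleGraph (Fin V)} {q f : Fin V → ℝ}
    {c : ℝ} (heig : Ham G q *ᵥ f = c • f) (u : Fin V → ℝ) :
    2 * ((f * u) ⬝ᵥ ((Ham G q - c • 1) *ᵥ (f * u))) =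
      ∑ a, ∑ b, if G.Adj a b then f a * f b * (u a - u b) ^ 2 else 0 := by
  have hf : (Ham G q - c • 1) *ᵥ f = 0 := by
    rw [sub_mulVec, heig, smul_mulVec, one_mulVec, sub_self]
  rw [(Ham_sub_smul_one_isSymm G q c).two_mul_dotProduct_mul_mulVec hf, ← Finset.sum_neg_distrib]
  refine Finset.sum_congr rfl fun a _ => ?_
  rw [← Finset.sum_neg_distrib]
  refine Finset.sum_congr rfl fun b _ => ?_
  by_cases hab : a = b
  · subst hab; simp
  · by_cases hadj : G.Adj a b <;> simp [Ham, hab, hadj]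

lemma nodalCount_le_card_eigenvalues_le {V : ℕ} {G : SimpleGraph (Fin V)} {q f : Fin V → ℝ}
    {c : ℝ} (heig : Ham G q *ᵥ f = c • f) (hf : ∀ v, f v ≠ 0) :
    nodalCount G f ≤ Fintype.card {k // (Ham_isHermitian G q).eigenvalues k ≤ c} := by
  set P := posSub G f
  let L := LinearMap.mulLeft ℝ f ∘ₗ LinearMap.funLeft ℝ ℝ P.connectedComponentMk
  have hL : Function.Injective L :=
    (Pi.isUnit_iff.mpr fun v => (hf v).isUnit).mul_right_injective.comp
      (LinearMap.funLeft_injective_of_surjective _ _ _ Quot.mk_surjective)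
  have hdim : nodalCount G f = Module.finrank ℝ (LinearMap.range L) := by
    rw [LinearMap.finrank_range_of_inj hL, Module.finrank_fintype_fun_eq_card, nodalCount,
      Nat.card_eq_fintype_card]
  rw [hdim]
  refine (Ham_isHermitian G q).finrank_le_card_eigenvalues_le c _ ?_
  rintro _ ⟨t, rfl⟩
  suffices 2 * (L t ⬝ᵥ ((Ham G q - c • 1) *ᵥ L t)) ≤ 0 by linarith
  rw [show L t = f * (t ∘ P.connectedComponentMk) from rfl,
    two_mul_dotProduct_mul_Ham_sub_mulVec heig]
  refine Finset.sum_nonpos fun a _ => Finset.sum_nonpos fun b _ => ?_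
  split_ifs with hadj
  · rcases le_or_gt (f a * f b) 0 with hab | hab
    · exact mul_nonpos_of_nonpos_of_nonneg hab (sq_nonneg _)
    · have hP : P.Adj a b := ⟨hadj, hab⟩
      simp [SimpleGraph.ConnectedComponent.connectedComponentMk_eq_of_adj hP]
  · exact le_rfl

lemma Sym2.mk_out {α : Type*} (e : Sym2 α) : s(e.out.1, e.out.2) = e := by
  rw [Sym2.mk, e.out_eq]

section EdgeDiff
variable (K : Type*) [Field K] {α : Type*}

/-- Each edge `e ∈ S` is oriented arbitrarily by `Quot.out`; only the kernel matters. -/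
noncomputable def edgeDiff (S : Set (Sym2 α)) : (α → K) →ₗ[K] (S → K) :=
  LinearMap.pi fun e =>
    LinearMap.proj (R := K) (φ := fun _ => K) e.1.out.1 - LinearMap.proj e.1.out.2

variable {K}

lemma mem_ker_edgeDiff {S : Set (Sym2 α)} {u : α → K} :
    u ∈ LinearMap.ker (edgeDiff K S) ↔ ∀ a b, s(a, b) ∈ S → u a = u b := by
  simp only [LinearMap.mem_ker, funext_iff, edgeDiff, LinearMap.pi_apply, LinearMap.sub_apply,
    LinearMap.proj_apply, Pi.zero_apply, sub_eq_zero, Subtype.forall]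
  refine ⟨fun h a b hab => ?_, fun h e he => h _ _ (by rwa [Sym2.mk_out])⟩
  rcases Sym2.eq_iff.mp (Sym2.mk_out s(a, b)) with ⟨ha, hb⟩ | ⟨ha, hb⟩
  · simpa only [ha, hb] using h _ hab
  · simpa only [ha, hb, eq_comm] using h _ hab

lemma card_sub_ncard_le_finrank_ker_edgeDiff [Fintype α] (S : Set (Sym2 α)) :
    Fintype.card α - S.ncard ≤ Module.finrank K (LinearMap.ker (edgeDiff K S)) := by
  classical
  have := LinearMap.finrank_range_add_finrank_ker (edgeDiff K S)
  have hrange := Submodule.finrank_le (LinearMap.range (edgeDiff K S))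
  rw [Module.finrank_fintype_fun_eq_card] at this
  rw [Module.finrank_fintype_fun_eq_card, ← Nat.card_eq_fintype_card,
    Nat.card_coe_set_eq] at hrange
  omega

end EdgeDiff

lemma card_sub_flipCount_le_card_le_eigenvalues {V : ℕ} {G : SimpleGraph (Fin V)}
    {q f : Fin V → ℝ} {c : ℝ} (heig : Ham G q *ᵥ f = c • f) (hf : ∀ v, f v ≠ 0) :
    V - flipCount G f ≤ Fintype.card {k // c ≤ (Ham_isHermitian G q).eigenvalues k} := by
  set S := {e ∈ G.edgeSet | ∃ a b, e = s(a, b) ∧ f a * f b < 0}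
  set N := LinearMap.ker (edgeDiff ℝ S)
  let L := LinearMap.mulLeft ℝ f ∘ₗ N.subtype
  have hL : Function.Injective L :=
    (Pi.isUnit_iff.mpr fun v => (hf v).isUnit).mul_right_injective.comp Subtype.val_injective
  have hdim : V - flipCount G f ≤ Module.finrank ℝ (LinearMap.range L) := by
    rw [LinearMap.finrank_range_of_inj hL]
    have := card_sub_ncard_le_finrank_ker_edgeDiff (K := ℝ) S
    rwa [Fintype.card_fin] at this
  refine hdim.trans <| (Ham_isHermitian G q).finrank_le_card_le_eigenvalues c _ ?_
  rintro _ ⟨⟨u, hu⟩, rfl⟩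
  suffices 0 ≤ 2 * (L ⟨u, hu⟩ ⬝ᵥ ((Ham G q - c • 1) *ᵥ L ⟨u, hu⟩)) by linarith
  rw [show L ⟨u, hu⟩ = f * u from rfl, two_mul_dotProduct_mul_Ham_sub_mulVec heig]
  refine Finset.sum_nonneg fun a _ => Finset.sum_nonneg fun b _ => ?_
  split_ifs with hadj
  · rcases le_or_gt 0 (f a * f b) with hab | hab
    · exact mul_nonneg hab (sq_nonneg _)
    · simp [mem_ker_edgeDiff.mp hu a b ⟨hadj, a, b, rfl, hab⟩]
  · exact le_rfl

lemma Set.ncard_eq_finsum_ncard_fiber {α β : Type*} [Finite α] [Finite β]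
    (s : Set α) (g : α → β) : s.ncard = ∑ᶠ b, {a | a ∈ s ∧ g a = b}.ncard := by
  classical
  have := Fintype.ofFinite α
  have := Fintype.ofFinite β
  simp only [finsum_eq_sum_of_fintype, Set.ncard_eq_toFinset_card', Set.toFinset_ofPred]
  rw [Finset.card_eq_sum_card_fiberwise (f := g) (t := Finset.univ)
    fun _ _ => Finset.mem_univ _]
  refine Finset.sum_congr rfl fun b _ => congrArg Finset.card ?_
  ext a; simp

section Components
variable {V : ℕ} (H : SimpleGraph (Fin V))

lemma compVerts_le_compEdges_add_one (c : H.ConnectedComponent) :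
    compVerts H c ≤ compEdges H c + 1 := by
  refine c.connected_toSimpleGraph.card_vert_le_card_edgeSet_add_one.trans
    (Nat.add_le_add_right ?_ 1)
  let emb : c.toSimpleGraph.edgeSet → {e ∈ H.edgeSet | ∀ v ∈ e, H.connectedComponentMk v = c} :=
    fun e => ⟨Sym2.map Subtype.val e.1, by
      obtain ⟨e, he⟩ := e
      induction e using Sym2.ind with
      | _ a b =>
        refine ⟨he, fun v hv => ?_⟩
        obtain ⟨w, -, rfl⟩ := Sym2.mem_map.mp hv
        exact w.2⟩
  exact Nat.card_le_card_of_injective emb fun e e' h =>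
    Subtype.ext (Sym2.map.injective Subtype.val_injective (congrArg Subtype.val h))

lemma sum_compVerts : ∑ c, compVerts H c = V := by
  have := Set.ncard_eq_finsum_ncard_fiber Set.univ H.connectedComponentMk
  simp only [Set.ncard_univ, Nat.card_eq_fintype_card, Fintype.card_fin, Set.mem_univ,
    true_and, finsum_eq_sum_of_fintype] at this
  exact (Finset.sum_congr rfl fun c _ => Nat.card_coe_set_eq _).trans this.symm

lemma sum_compEdges : ∑ c, compEdges H c = H.edgeSet.ncard := by
  rw [Set.ncard_eq_finsum_ncard_fiber H.edgeSet fun e => H.connectedComponentMk e.out.1,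
    finsum_eq_sum_of_fintype]
  refine Finset.sum_congr rfl fun c _ => congrArg Set.ncard (Set.ext fun e => ?_)
  simp only [Set.mem_ofPred_eq]
  refine and_congr_right fun he => ⟨fun h => h _ e.out_fst_mem, fun h v hv => ?_⟩
  have hadj : H.Adj e.out.1 e.out.2 := by rwa [← SimpleGraph.mem_edgeSet, Sym2.mk_out]
  rw [← Sym2.mk_out e, Sym2.mem_iff] at hv
  rcases hv with rfl | rfl
  · exact h
  · rwa [← SimpleGraph.ConnectedComponent.connectedComponentMk_eq_of_adj hadj]

lemma cast_finsum_compEdges_add_one_sub_compVerts :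
    ((∑ᶠ c, (compEdges H c + 1 - compVerts H c) : ℕ) : ℤ) =
      H.edgeSet.ncard + Nat.card H.ConnectedComponent - V := by
  have hE : ∑ c, (compEdges H c : ℤ) = H.edgeSet.ncard := by exact_mod_cast sum_compEdges H
  have hV : ∑ c, (compVerts H c : ℤ) = V := by exact_mod_cast sum_compVerts H
  rw [finsum_eq_sum_of_fintype, Nat.cast_sum,
    Finset.sum_congr rfl fun c _ => Nat.cast_sub (compVerts_le_compEdges_add_one H c)]
  simp [Finset.sum_add_distrib, Finset.sum_sub_distrib, hE, hV, Nat.card_eq_fintype_card]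

end Components

lemma ncard_edgeSet_eq_add_flipCount {V : ℕ} (G : SimpleGraph (Fin V)) {f : Fin V → ℝ}
    (hf : ∀ v, f v ≠ 0) : G.edgeSet.ncard = (posSub G f).edgeSet.ncard + flipCount G f := by
  have hflip : ∀ a b, s(a, b) ∈ {e ∈ G.edgeSet | ∃ a b, e = s(a, b) ∧ f a * f b < 0} ↔
      G.Adj a b ∧ f a * f b < 0 := by
    intro a b
    simp only [Set.mem_ofPred_eq, SimpleGraph.mem_edgeSet, Sym2.eq_iff]
    refine and_congr_right fun _ => ⟨?_, fun h => ⟨a, b, .inl ⟨rfl, rfl⟩, h⟩⟩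
    rintro ⟨a', b', ⟨rfl, rfl⟩ | ⟨rfl, rfl⟩, h⟩
    · exact h
    · rwa [mul_comm]
  rw [flipCount, ← Set.ncard_union_eq ?_ (Set.toFinite _) (Set.toFinite _)]
  · congr 1
    ext e
    induction e using Sym2.ind with | _ a b => ?_
    rw [Set.mem_union, hflip, SimpleGraph.mem_edgeSet, SimpleGraph.mem_edgeSet]
    have := mul_ne_zero (hf a) (hf b)
    exact ⟨fun h => (lt_or_gt_of_ne this).symm.imp (⟨h, ·⟩) (⟨h, ·⟩), fun h => h.elim (·.1) (·.1)⟩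
  · refine Set.disjoint_left.mpr fun e he he' => ?_
    induction e using Sym2.ind with | _ a b => ?_
    exact ((SimpleGraph.mem_edgeSet _).mp he).2.not_gt ((hflip a b).mp he').2

/-- `n : Fin V` is the `0`-based position: the paper's `n` is `n + 1` here. -/
theorem stmt_10_general {V : ℕ} (G : SimpleGraph (Fin V)) (q : Fin V → ℝ)
    (f : Fin V → ℝ) (n : Fin V)
    (heig : Ham G q *ᵥ f = sortedEigs (Ham_isHermitian G q) n • f)
    (hnz : ∀ v, f v ≠ 0)
    (hsimple : ∀ k : Fin V,
      sortedEigs (Ham_isHermitian G q) k = sortedEigs (Ham_isHermitian G q) n → k = n) :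
    ((n : ℤ) + 1) - (betti G - (cycleCount G f : ℤ)) ≤ (nodalCount G f : ℤ) ∧
    nodalCount G f ≤ (n : ℕ) + 1 := by
  have hupper : nodalCount G f ≤ n + 1 :=
    card_eigenvalues_le_sortedEigs _ hsimple ▸ nodalCount_le_card_eigenvalues_le heig hnz
  have hflip : V - flipCount G f ≤ V - n :=
    card_sortedEigs_le_eigenvalues _ hsimple ▸ card_sub_flipCount_le_card_le_eigenvalues heig hnz
  have hcycle : (cycleCount G f : ℤ) = (posSub G f).edgeSet.ncard + nodalCount G f - V :=
    cast_finsum_compEdges_add_one_sub_compVerts (posSub G f)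
  refine ⟨?_, hupper⟩
  rw [betti, hcycle, ncard_edgeSet_eq_add_flipCount G hnz]
  have := n.isLt
  push_cast
  omega

/-- For a non-degenerate eigenvector `f⁽ⁿ⁾` of `H(G)` (the `n`-th one,
`1`-based; here `n = (n₀ : ℕ) + 1` with `n₀ : Fin V` a `0`-based position):
`n - (β(G) - ℓ_n) ≤ ν_n ≤ n`. -/
theorem stmt_10 {V : ℕ} (G : SimpleGraph (Fin V)) (hG : G.Connected) (q : Fin V → ℝ)
    (f : Fin V → ℝ) (n : Fin V)
    (heig : Ham G q *ᵥ f = sortedEigs (Ham_isHermitian G q) n • f)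
    (hnz : ∀ v, f v ≠ 0)
    (hsimple : ∀ k : Fin V,
      sortedEigs (Ham_isHermitian G q) k = sortedEigs (Ham_isHermitian G q) n → k = n) :
    ((n : ℤ) + 1) - (betti G - (cycleCount G f : ℤ)) ≤ (nodalCount G f : ℤ) ∧
    nodalCount G f ≤ (n : ℕ) + 1 :=
  stmt_10_general G q f n heig hnz hsimple
end

section
/- Let f^{(n)} be a non-degenerate eigenvector of H(G) corresponding to λ_n(G), let P be its nodal partition (the ν_n-partition of G whose removed edges are exactly the edges (i,j) with f^{(n)}_i f^{(n)}_j < 0), and for each removed edge e = (i,j) with i < j set α^c_e = f^{(n)}_j / f^{(n)}_i (which is negative). Then for every component P_k the restriction of f^{(n)} to P_k is an eigenvector of the block H(P_k;α^c) whose eigenvalue is the lowest eigenvalue λ_1(P_k;α^c), and λ_1(P_k;α^c) = λ_n(G) for all k. In particular (P,α^c) is an equipartition with equipartition energy λ_n(G). -/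
open Matrix

open Classical in
/-- The restriction of `f : Fin V → ℝ` to the connected component `c` of the graph `H`,
extended by zero to the other components. -/
noncomputable def restrictComp {V : ℕ} (H : SimpleGraph (Fin V)) (c : H.ConnectedComponent)
    (f : Fin V → ℝ) : Fin V → ℝ :=
  fun v => if H.connectedComponentMk v = c then f v else 0

/-- The lowest eigenvalue `λ₁(P_k;α)` of the block of the (Hermitian) matrix `M`
corresponding to the connected component `c` of the graph `H`, i.e. of the principal
submatrix of `M` indexed by the vertices of `c`. -/
noncomputable def lam1Block {V : ℕ} {M : Matrix (Fin V) (Fin V) ℝ} (hM : M.IsHermitian)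
    (H : SimpleGraph (Fin V)) (c : H.ConnectedComponent) : ℝ :=
  letI : Fintype {v : Fin V // H.connectedComponentMk v = c} := Fintype.ofFinite _
  letI : DecidableEq {v : Fin V // H.connectedComponentMk v = c} := Classical.decEq _
  ⨅ w : {v : Fin V // H.connectedComponentMk v = c},
    (hM.submatrix (Subtype.val : {v : Fin V // H.connectedComponentMk v = c} → Fin V)).eigenvalues w

/-!
Each `B(e; f_j / f_i)` annihilates `f`, so `f` is still an eigenvector of `H(P; α^c)` for
`λ_n(G)`. Off the diagonal, `H(P; α^c)` is `-A(P)`: the `+1` entries of the `B`'s cancel exactly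
the removed edges. Hence `H(P; α^c)` is block diagonal along the nodal domains and the
restriction of `f` to a nodal domain is an eigenvector of its block. On a nodal domain `f` has
constant sign, and for a symmetric matrix with nonpositive off-diagonal entries the eigenvalue
of a positive eigenvector `g` is the lowest one: compare any other eigenvector `h` with `g` at a
vertex maximizing `h / g`.
-/

open Finset

namespace Matrix

variable {n : Type*} [Fintype n] {M : Matrix n n ℝ} {g : n → ℝ} {μ : ℝ}

theorem le_of_mulVec_eq_smul_of_pos (hoff : ∀ i j, i ≠ j → M i j ≤ 0) (hg : ∀ i, 0 < g i)
    (hMg : M *ᵥ g = μ • g) {h : n → ℝ} (hh : h ≠ 0) {ν : ℝ} (hMh : M *ᵥ h = ν • h) :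
    μ ≤ ν := by
  wlog hpos : ∃ i, 0 < h i generalizing h
  · obtain ⟨i, hi⟩ := Function.ne_iff.1 hh
    push Not at hpos
    refine this (neg_ne_zero.2 hh) (by rw [mulVec_neg, hMh, smul_neg]) ⟨i, ?_⟩
    simpa using lt_of_le_of_ne (hpos i) hi
  obtain ⟨i₀, hi₀⟩ := hpos
  obtain ⟨m, -, hm⟩ := Finset.exists_max_image univ (fun i => h i / g i) ⟨i₀, mem_univ _⟩
  -- `t • g - h ≥ 0` vanishes at `m`, so the off-diagonal signs make `(M *ᵥ (t • g - h)) m ≤ 0`.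
  set t := h m / g m
  have htm : t * g m = h m := div_mul_cancel₀ _ (hg m).ne'
  have hd : ∀ i, 0 ≤ (t • g - h) i := fun i => by
    have := (div_le_iff₀ (hg i)).1 (hm i (mem_univ i))
    simp only [Pi.sub_apply, Pi.smul_apply, smul_eq_mul]
    linarith
  have hhm : 0 < h m := by
    have := (lt_of_lt_of_le (div_pos hi₀ (hg i₀)) (hm i₀ (mem_univ _)))
    rw [← htm]; exact mul_pos this (hg m)
  have hMd : (M *ᵥ (t • g - h)) m = (μ - ν) * h m := by
    rw [mulVec_sub, mulVec_smul, hMg, hMh]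
    simp only [Pi.sub_apply, Pi.smul_apply, smul_eq_mul]
    linear_combination μ * htm
  have hMd_nonpos : (M *ᵥ (t • g - h)) m ≤ 0 := by
    refine sum_nonpos fun i _ => ?_
    by_cases him : m = i
    · subst him
      simp [Pi.sub_apply, Pi.smul_apply, smul_eq_mul, htm]
    · exact mul_nonpos_of_nonpos_of_nonneg (hoff m i him) (hd i)
  nlinarith

theorem IsHermitian.iInf_eigenvalues_eq_of_mulVec_eq_smul_of_pos [DecidableEq n] [Nonempty n]
    (hM : M.IsHermitian) (hoff : ∀ i j, i ≠ j → M i j ≤ 0) (hg : ∀ i, 0 < g i)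
    (hMg : M *ᵥ g = μ • g) :
    ⨅ i, hM.eigenvalues i = μ := by
  have hg0 : g ≠ 0 := fun h => (hg (Classical.arbitrary n)).ne' (congrFun h _)
  obtain ⟨i, hi⟩ : μ ∈ Set.range hM.eigenvalues := by
    rw [← hM.spectrum_real_eq_range_eigenvalues, ← spectrum_toLin']
    exact (Module.End.hasEigenvalue_of_hasEigenvector
      ⟨Module.End.mem_eigenspace_iff.2 hMg, hg0⟩).mem_spectrum
  refine le_antisymm (hi ▸ ciInf_le (Set.finite_range _).bddBelow i) (le_ciInf fun j => ?_)
  exact le_of_mulVec_eq_smul_of_pos hoff hg hMg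
    (by simpa using hM.eigenvectorBasis.orthonormal.ne_zero j) (hM.mulVec_eigenvectorBasis j)

theorem submatrix_val_mulVec_comp_val {p : n → Prop} [Fintype {i // p i}]
    (hg : ∀ i, ¬ p i → g i = 0) :
    (M.submatrix Subtype.val Subtype.val : Matrix {i // p i} {i // p i} ℝ) *ᵥ (g ∘ Subtype.val) =
      (M *ᵥ g) ∘ Subtype.val := by
  classical
  ext i
  simp only [mulVec, dotProduct, submatrix_apply, Function.comp_apply]
  rw [← Finset.sum_subtype (univ.filter p) (by simp) fun j => M i j * g j,
    Finset.sum_filter_of_ne]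
  intro j _ hj
  by_contra hpj
  simp [hg j hpj] at hj

end Matrix

section Graph

variable {V : ℕ}

theorem lam1Block_eq_of_mulVec_eq_smul {M : Matrix (Fin V) (Fin V) ℝ} (hM : M.IsHermitian)
    (hoff : ∀ i j, i ≠ j → M i j ≤ 0) {H : SimpleGraph (Fin V)} {c : H.ConnectedComponent}
    {g : Fin V → ℝ} (hgpos : ∀ v, H.connectedComponentMk v = c → 0 < g v)
    (hgzero : ∀ v, H.connectedComponentMk v ≠ c → g v = 0) {μ : ℝ} (hMg : M *ᵥ g = μ • g) :
    lam1Block hM H c = μ := by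
  obtain ⟨v₀, hv₀⟩ := c.exists_rep
  let := Fintype.ofFinite {v : Fin V // H.connectedComponentMk v = c}
  let := Classical.decEq {v : Fin V // H.connectedComponentMk v = c}
  have : Nonempty {v : Fin V // H.connectedComponentMk v = c} := ⟨⟨v₀, hv₀⟩⟩
  refine (hM.submatrix Subtype.val).iInf_eigenvalues_eq_of_mulVec_eq_smul_of_pos
    (g := g ∘ Subtype.val) (fun i j hij => hoff i j (Subtype.coe_injective.ne hij))
    (fun i => hgpos i i.2) ?_
  rw [Matrix.submatrix_val_mulVec_comp_val hgzero, hMg]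
  rfl

open Classical in
theorem Ham_apply_of_ne (G : SimpleGraph (Fin V)) (q : Fin V → ℝ) {v u : Fin V}
    (hvu : v ≠ u) : Ham G q v u = if G.Adj v u then -1 else 0 := by
  simp [Ham, hvu]

theorem Bmat_apply_of_ne (i j : Fin V) (α : ℝ) {v u : Fin V} (hvu : v ≠ u) :
    Bmat i j α v u = if s(i, j) = s(v, u) then 1 else 0 := by
  have hi : ¬(v = i ∧ u = i) := fun h => hvu (h.1.trans h.2.symm)
  have hj : ¬(v = j ∧ u = j) := fun h => hvu (h.1.trans h.2.symm)
  simp only [Bmat, of_apply, if_neg hi, if_neg hj, zero_add, Sym2.eq_iff]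
  congr 1
  apply propext
  constructor <;> rintro (⟨rfl, rfl⟩ | ⟨rfl, rfl⟩) <;> simp

theorem Bmat_mulVec_div_eq_zero {i j : Fin V} (hij : i ≠ j) {f : Fin V → ℝ} (hi : f i ≠ 0)
    (hj : f j ≠ 0) : Bmat i j (f j / f i) *ᵥ f = 0 := by
  ext v
  rcases eq_or_ne v i with rfl | hvi
  · simp [mulVec, dotProduct, Bmat, hij, ite_and, add_mul, Finset.sum_add_distrib]
    field_simp
    ring
  · rcases eq_or_ne v j with rfl | hvj
    · simp [mulVec, dotProduct, Bmat, hij.symm, ite_and, add_mul, Finset.sum_add_distrib]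
      field_simp
      ring
    · simp [mulVec, dotProduct, Bmat, hvi, hvj]

theorem sum_Bmat_apply_of_ne {S : Finset (Fin V × Fin V)} (hS : ∀ p ∈ S, p.1 < p.2)
    (α : Fin V × Fin V → ℝ) {v u : Fin V} (hvu : v ≠ u) :
    (∑ p ∈ S, Bmat p.1 p.2 (α p)) v u =
      if s(v, u) ∈ S.image (fun p => s(p.1, p.2)) then 1 else 0 := by
  rw [Matrix.sum_apply]
  simp_rw [Bmat_apply_of_ne _ _ _ hvu]
  rw [← Finset.sum_image (f := fun e => if e = s(v, u) then (1 : ℝ) else 0),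
    Finset.sum_ite_eq']
  intro p hp p' hp' h
  rcases Sym2.eq_iff.1 h with ⟨h1, h2⟩ | ⟨h1, h2⟩
  · exact Prod.ext h1 h2
  · exact absurd (h1 ▸ h2 ▸ hS p hp) (lt_asymm (hS p' hp'))

open Classical in
theorem Ham_add_sum_Bmat_apply_of_ne (G : SimpleGraph (Fin V)) (q : Fin V → ℝ)
    {S : Finset (Fin V × Fin V)} (hS : ∀ p ∈ S, G.Adj p.1 p.2 ∧ p.1 < p.2)
    (α : Fin V × Fin V → ℝ) {v u : Fin V} (hvu : v ≠ u) :
    (Ham G q + ∑ p ∈ S, Bmat p.1 p.2 (α p)) v u =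
      if (G.deleteEdges ↑(S.image fun p => s(p.1, p.2))).Adj v u then -1 else 0 := by
  have hD : s(v, u) ∈ S.image (fun p => s(p.1, p.2)) → G.Adj v u := by
    rw [Finset.mem_image]
    rintro ⟨p, hp, hpe⟩
    rw [← SimpleGraph.mem_edgeSet, ← hpe]
    exact (hS p hp).1
  rw [Matrix.add_apply, Ham_apply_of_ne G q hvu,
    sum_Bmat_apply_of_ne (fun p hp => (hS p hp).2) α hvu]
  have hP : (G.deleteEdges ↑(S.image fun p => s(p.1, p.2))).Adj v u ↔
      G.Adj v u ∧ s(v, u) ∉ S.image (fun p => s(p.1, p.2)) := by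
    rw [SimpleGraph.deleteEdges_adj, Finset.mem_coe]
  simp only [hP]
  split_ifs <;> grind

theorem mulVec_restrictComp {M : Matrix (Fin V) (Fin V) ℝ} {H : SimpleGraph (Fin V)}
    (hM : ∀ v u, v ≠ u → M v u ≠ 0 → H.Adj v u) (c : H.ConnectedComponent) {f : Fin V → ℝ}
    {μ : ℝ} (hf : M *ᵥ f = μ • f) : M *ᵥ restrictComp H c f = μ • restrictComp H c f := by
  classical
  have hrow : ∀ v u, M v u * restrictComp H c f u =
      if H.connectedComponentMk v = c then M v u * f u else 0 := by
    intro v u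
    by_cases h0 : M v u = 0
    · simp [h0]
    have hvu : H.connectedComponentMk u = H.connectedComponentMk v := by
      rcases eq_or_ne v u with rfl | hne
      · rfl
      · exact (SimpleGraph.ConnectedComponent.sound (hM v u hne h0).reachable).symm
    simp only [restrictComp, hvu]
    split_ifs <;> simp
  ext v
  have hv : ∑ u, M v u * f u = μ * f v := congrFun hf v
  simp only [mulVec, dotProduct, hrow, Pi.smul_apply, smul_eq_mul]
  by_cases hvc : H.connectedComponentMk v = c <;> simp [hvc, hv, restrictComp]

theorem mul_pos_of_reachable {W : Type*} {H : SimpleGraph W} {f : W → ℝ} (hf : ∀ v, f v ≠ 0)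
    (hH : ∀ v u, H.Adj v u → 0 < f v * f u) {v u : W} (h : H.Reachable v u) :
    0 < f v * f u := by
  rw [SimpleGraph.reachable_iff_reflTransGen] at h
  induction h with
  | refl => exact mul_self_pos.2 (hf v)
  | @tail b d _ hbd ih =>
    have := hH b d hbd
    nlinarith [mul_self_pos.2 (hf b)]

theorem mul_pos_of_adj_deleteEdges {G : SimpleGraph (Fin V)} {f : Fin V → ℝ}
    (hf : ∀ v, f v ≠ 0) {S : Finset (Fin V × Fin V)}
    (hS : ∀ p, p ∈ S ↔ G.Adj p.1 p.2 ∧ p.1 < p.2 ∧ f p.1 * f p.2 < 0) {v u : Fin V}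
    (h : (G.deleteEdges ↑(S.image fun p => s(p.1, p.2))).Adj v u) : 0 < f v * f u := by
  obtain ⟨hadj, hnot⟩ := SimpleGraph.deleteEdges_adj.1 h
  refine lt_of_le_of_ne (not_lt.1 fun hneg => hnot ?_) (mul_ne_zero (hf v) (hf u)).symm
  simp only [Finset.coe_image, Set.mem_image, Finset.mem_coe]
  rcases lt_or_gt_of_ne hadj.ne with hvu | huv
  · exact ⟨(v, u), (hS _).2 ⟨hadj, hvu, hneg⟩, rfl⟩
  · exact ⟨(u, v), (hS _).2 ⟨hadj.symm, huv, by rwa [mul_comm]⟩, Sym2.eq_swap⟩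

theorem lam1Block_eq_of_mulVec_restrictComp {M : Matrix (Fin V) (Fin V) ℝ}
    (hM : M.IsHermitian) (hoff : ∀ i j, i ≠ j → M i j ≤ 0) {H : SimpleGraph (Fin V)}
    {c : H.ConnectedComponent} {f : Fin V → ℝ} (hsign : ∀ v w, H.connectedComponentMk v = c →
      H.connectedComponentMk w = c → 0 < f v * f w)
    {μ : ℝ} (hf : M *ᵥ restrictComp H c f = μ • restrictComp H c f) :
    lam1Block hM H c = μ := by
  obtain ⟨v₀, hv₀⟩ := c.exists_rep
  refine lam1Block_eq_of_mulVec_eq_smul hM hoff (g := f v₀ • restrictComp H c f)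
    (fun v hv => ?_) (fun v hv => ?_) ?_
  · simpa [restrictComp, hv] using hsign v₀ v hv₀ hv
  · simp [restrictComp, hv]
  · rw [mulVec_smul, hf, smul_comm]

end Graph

theorem stmt_17_general {V : ℕ} (G : SimpleGraph (Fin V)) (q : Fin V → ℝ)
    (f : Fin V → ℝ) (n : Fin V)
    (heig : Ham G q *ᵥ f = sortedEigs (Ham_isHermitian G q) n • f)
    (hnz : ∀ v, f v ≠ 0)
    (S : Finset (Fin V × Fin V))
    (hS : ∀ p : Fin V × Fin V, p ∈ S ↔ (G.Adj p.1 p.2 ∧ p.1 < p.2 ∧ f p.1 * f p.2 < 0))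
    (P : SimpleGraph (Fin V)) (hPdef : P = G.deleteEdges ↑(S.image fun p => s(p.1, p.2)))
    (HP : Matrix (Fin V) (Fin V) ℝ)
    (hHPdef : HP = Ham G q + ∑ p ∈ S, Bmat p.1 p.2 (f p.2 / f p.1))
    (hHP : HP.IsHermitian) :
    (∀ p ∈ S, f p.2 / f p.1 < 0) ∧
    (∀ c : P.ConnectedComponent,
      restrictComp P c f ≠ 0 ∧
      HP *ᵥ restrictComp P c f = sortedEigs (Ham_isHermitian G q) n • restrictComp P c f ∧
      lam1Block hHP P c = sortedEigs (Ham_isHermitian G q) n) := by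
  classical
  have hSedge : ∀ p ∈ S, G.Adj p.1 p.2 ∧ p.1 < p.2 := fun p hp =>
    ⟨((hS p).1 hp).1, ((hS p).1 hp).2.1⟩
  have hoff : ∀ v u, v ≠ u → HP v u = if P.Adj v u then -1 else 0 := fun v u hvu => by
    subst hPdef hHPdef
    convert Ham_add_sum_Bmat_apply_of_ne G q hSedge _ hvu
  have hHPf : HP *ᵥ f = sortedEigs (Ham_isHermitian G q) n • f := by
    rw [hHPdef, add_mulVec, sum_mulVec, Finset.sum_eq_zero fun p hp =>
      Bmat_mulVec_div_eq_zero (hSedge p hp).2.ne (hnz _) (hnz _), add_zero, heig]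
  have hblock (c : P.ConnectedComponent) :
      HP *ᵥ restrictComp P c f = sortedEigs (Ham_isHermitian G q) n • restrictComp P c f :=
    mulVec_restrictComp (fun v u hvu h0 => by_contra fun h => h0 (by simp [hoff v u hvu, h]))
      c hHPf
  have hPsign (v u : Fin V) (h : P.Adj v u) : 0 < f v * f u :=
    mul_pos_of_adj_deleteEdges hnz hS (hPdef ▸ h)
  refine ⟨fun p hp =>
    div_neg_iff.2 ((mul_neg_iff.1 ((hS p).1 hp).2.2).symm.imp And.symm And.symm),
    fun c => ⟨?_, hblock c, ?_⟩⟩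
  · obtain ⟨v, hv⟩ : ∃ v, P.connectedComponentMk v = c := c.exists_rep
    exact Function.ne_iff.2 ⟨v, by
      simpa only [restrictComp, Pi.zero_apply, if_pos hv] using hnz v⟩
  · refine lam1Block_eq_of_mulVec_restrictComp hHP
      (fun v u hvu => by rw [hoff v u hvu]; split_ifs <;> norm_num)
      (fun v w hv hw => mul_pos_of_reachable hnz hPsign
        (SimpleGraph.ConnectedComponent.exact (hv.trans hw.symm))) (hblock c)

/-- Let `f⁽ⁿ⁾` be a non-degenerate eigenvector of `H(G)` for `λ_n(G)`, let
`P` be its nodal partition (removed edges = sign-flip edges of `f⁽ⁿ⁾`), and for each removed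
edge `(i,j)`, `i < j`, set `α^c_e = f_j / f_i` (which is negative). Then the restriction of
`f⁽ⁿ⁾` to each component `P_k` is an eigenvector of the block of `H(P;α^c)` corresponding to
`P_k`, its eigenvalue is the lowest eigenvalue `λ₁(P_k;α^c)` of that block, and
`λ₁(P_k;α^c) = λ_n(G)` for every `k`; in particular `(P,α^c)` is an equipartition with
equipartition energy `λ_n(G)`. -/
theorem stmt_17 {V : ℕ} (G : SimpleGraph (Fin V)) (hG : G.Connected) (q : Fin V → ℝ)
    (f : Fin V → ℝ) (n : Fin V)
    (heig : Ham G q *ᵥ f = sortedEigs (Ham_isHermitian G q) n • f)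
    (hnz : ∀ v, f v ≠ 0)
    (hsimple : ∀ k : Fin V,
      sortedEigs (Ham_isHermitian G q) k = sortedEigs (Ham_isHermitian G q) n → k = n)
    (S : Finset (Fin V × Fin V))
    (hS : ∀ p : Fin V × Fin V, p ∈ S ↔ (G.Adj p.1 p.2 ∧ p.1 < p.2 ∧ f p.1 * f p.2 < 0))
    (P : SimpleGraph (Fin V)) (hPdef : P = G.deleteEdges ↑(S.image fun p => s(p.1, p.2)))
    (HP : Matrix (Fin V) (Fin V) ℝ)
    (hHPdef : HP = Ham G q + ∑ p ∈ S, Bmat p.1 p.2 (f p.2 / f p.1))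
    (hHP : HP.IsHermitian) :
    (∀ p ∈ S, f p.2 / f p.1 < 0) ∧
    (∀ c : P.ConnectedComponent,
      restrictComp P c f ≠ 0 ∧
      HP *ᵥ restrictComp P c f = sortedEigs (Ham_isHermitian G q) n • restrictComp P c f ∧
      lam1Block hHP P c = sortedEigs (Ham_isHermitian G q) n) :=
  stmt_17_general G q f n heig hnz S hS P hPdef HP hHPdef hHP
end

section
/- Let T be a finite tree (a finite, simple, connected graph with β(T) = 0), let H(T) = −A(T) + Q be a discrete Schrödinger operator on T, and let f^{(n)} be a non-degenerate eigenvector of H(T) corresponding to its n-th eigenvalue. Then f^{(n)} is Courant sharp: the number of its nodal domains is ν_n = n, and the number of edges across which it changes sign is φ_n = n − 1. -/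
open Matrix

/-!
For an eigenvector `f` of `H = Ham G q` with eigenvalue `λ` and any `y`, the ground-state
(Picone) identity `⟨f y, (H - λ) (f y)⟩ = ½ ∑_{a ~ b} f_a f_b (y_a - y_b)²` holds. So `H - λ` is
positive semidefinite on the products `f y` with `y` constant across the sign-changing edges, a
space of dimension at least `V - φ`, and negative definite on those with `y` constant on every
nodal domain and zero at a fixed vertex, a space of dimension `ν - 1`. If `λ = λ_n` is simple,
exactly `n - 1` eigenvalues lie below it, so the min-max principle gives `n - 1 ≤ φ` and
`ν - 1 ≤ n - 1`. A graph with `E` edges has at least `V - E` components, and on a tree the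
positive edges number `V - 1 - φ`, so `φ + 1 ≤ ν`.
-/

namespace Matrix.IsHermitian

variable {ι : Type*} [Fintype ι] [DecidableEq ι] {A : Matrix ι ι ℝ} (hA : A.IsHermitian)

lemma dotProduct_mulVec_sub_mul_eq_sum (μ : ℝ) (x : ι → ℝ) :
    x ⬝ᵥ A *ᵥ x - μ * (x ⬝ᵥ x) =
      ∑ i, (hA.eigenvalues i - μ) * (star (hA.eigenvectorUnitary : Matrix ι ι ℝ) *ᵥ x) i ^ 2 := by
  set U : Matrix ι ι ℝ := (hA.eigenvectorUnitary : Matrix ι ι ℝ)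
  set y := star U *ᵥ x
  have hdot : ∀ w, x ⬝ᵥ U *ᵥ w = y ⬝ᵥ w := fun w => by
    rw [dotProduct_mulVec, ← mulVec_transpose, ← conjTranspose_eq_transpose_of_trivial,
      ← star_eq_conjTranspose]
  have hAx : A *ᵥ x = U *ᵥ (diagonal hA.eigenvalues *ᵥ y) := by
    have hA' : A = U * diagonal hA.eigenvalues * star U := by
      conv_lhs => rw [hA.spectral_theorem]
      simp [U]
    rw [mulVec_mulVec, mulVec_mulVec, ← hA']
  have hx : x = U *ᵥ y := by
    rw [mulVec_mulVec, Unitary.mul_star_self_of_mem hA.eigenvectorUnitary.2, one_mulVec]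
  have hxx : x ⬝ᵥ x = ∑ i, y i ^ 2 := by
    conv_lhs => enter [2]; rw [hx]
    rw [hdot, dotProduct]
    simp only [sq]
  rw [hAx, hdot, hxx, Finset.mul_sum, dotProduct, ← Finset.sum_sub_distrib]
  exact Finset.sum_congr rfl fun i _ => by rw [mulVec_diagonal]; ring

variable {E : Type*} [AddCommGroup E] [Module ℝ E]

lemma finrank_le_card_eigenvalues_lt (μ : ℝ) (L : E →ₗ[ℝ] ι → ℝ)
    (hL : ∀ z ≠ 0, L z ⬝ᵥ A *ᵥ L z < μ * (L z ⬝ᵥ L z)) :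
    Module.finrank ℝ E ≤ Nat.card {i // hA.eigenvalues i < μ} := by
  set P := LinearMap.funLeft ℝ ℝ (Subtype.val : {i // hA.eigenvalues i < μ} → ι) ∘ₗ
    toLin' (star (hA.eigenvectorUnitary : Matrix ι ι ℝ)) ∘ₗ L
  have hP : Function.Injective P := by
    rw [← LinearMap.ker_eq_bot, Submodule.eq_bot_iff]
    intro z hz
    by_contra hz0
    refine (hL z hz0).not_ge (sub_nonneg.mp ?_)
    rw [hA.dotProduct_mulVec_sub_mul_eq_sum]
    refine Finset.sum_nonneg fun i _ => ?_
    by_cases hi : hA.eigenvalues i < μ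
    · have : (star (hA.eigenvectorUnitary : Matrix ι ι ℝ) *ᵥ L z) i = 0 :=
        congrFun (LinearMap.mem_ker.mp hz) ⟨i, hi⟩
      simp [this]
    · exact mul_nonneg (sub_nonneg.mpr (not_lt.mp hi)) (sq_nonneg _)
  simpa [Nat.card_eq_fintype_card] using LinearMap.finrank_le_finrank_of_injective hP

lemma finrank_add_card_eigenvalues_lt_le (μ : ℝ) (L : E →ₗ[ℝ] ι → ℝ)
    (hLinj : Function.Injective L) (hL : ∀ z, μ * (L z ⬝ᵥ L z) ≤ L z ⬝ᵥ A *ᵥ L z) :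
    Module.finrank ℝ E + Nat.card {i // hA.eigenvalues i < μ} ≤ Fintype.card ι := by
  set U : Matrix ι ι ℝ := (hA.eigenvectorUnitary : Matrix ι ι ℝ)
  set P := LinearMap.funLeft ℝ ℝ (Subtype.val : {i // ¬ hA.eigenvalues i < μ} → ι) ∘ₗ
    toLin' (star U) ∘ₗ L
  have hP : Function.Injective P := by
    rw [← LinearMap.ker_eq_bot, Submodule.eq_bot_iff]
    intro z hz
    have hhigh : ∀ i, ¬ hA.eigenvalues i < μ → (star U *ᵥ L z) i = 0 := fun i hi =>
      congrFun (LinearMap.mem_ker.mp hz) ⟨i, hi⟩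
    have hterm : ∀ i, (hA.eigenvalues i - μ) * (star U *ᵥ L z) i ^ 2 ≤ 0 := fun i => by
      by_cases hi : hA.eigenvalues i < μ
      · exact mul_nonpos_of_nonpos_of_nonneg (by linarith) (sq_nonneg _)
      · simp [hhigh i hi]
    have hsum := (Finset.sum_eq_zero_iff_of_nonpos fun i _ => hterm i).mp <| le_antisymm
      (Finset.sum_nonpos fun i _ => hterm i)
      (hA.dotProduct_mulVec_sub_mul_eq_sum μ (L z) ▸ sub_nonneg.mpr (hL z))
    have hy : star U *ᵥ L z = 0 := funext fun i => by
      by_cases hi : hA.eigenvalues i < μ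
      · simpa [sub_ne_zero.mpr hi.ne] using hsum i (Finset.mem_univ _)
      · exact hhigh i hi
    have hLz : L z = 0 := by
      rw [← one_mulVec (L z), ← Unitary.mul_star_self_of_mem hA.eigenvectorUnitary.2,
        ← mulVec_mulVec, hy, mulVec_zero]
    exact hLinj (hLz.trans L.map_zero.symm)
  have hle := LinearMap.finrank_le_finrank_of_injective hP
  rw [Module.finrank_fintype_fun_eq_card, Fintype.card_subtype_compl] at hle
  rw [Nat.card_eq_fintype_card]
  have := Fintype.card_subtype_le fun i => hA.eigenvalues i < μ
  omega

end Matrix.IsHermitian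

lemma Sym2.eq_of_apply_out_eq {α β : Type*} {y : α → β} {a b : α}
    (hy : y s(a, b).out.1 = y s(a, b).out.2) : y a = y b := by
  have hout : s(s(a, b).out.1, s(a, b).out.2) = s(a, b) := Quot.out_eq _
  rcases Sym2.eq_iff.mp hout with ⟨h1, h2⟩ | ⟨h1, h2⟩
  · rwa [h1, h2] at hy
  · rw [h1, h2] at hy
    exact hy.symm

lemma Tuple.card_lt_apply_sort {α : Type*} [LinearOrder α] {m : ℕ} (μ : Fin m → α) (k : Fin m)
    (hk : ∀ j, μ (Tuple.sort μ j) = μ (Tuple.sort μ k) → j = k) :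
    Nat.card {i // μ i < μ (Tuple.sort μ k)} = k := by
  have hlt : ∀ j, μ (Tuple.sort μ j) < μ (Tuple.sort μ k) ↔ j < k := fun j =>
    ⟨fun h => lt_of_not_ge fun hkj => h.not_ge (Tuple.monotone_sort μ hkj),
      fun h => (Tuple.monotone_sort μ h.le).lt_of_ne fun he => h.ne (hk j he)⟩
  rw [Nat.card_eq_fintype_card,
    ← Fintype.card_congr (Equiv.subtypeEquiv (Tuple.sort μ) fun _ => Iff.rfl),
    Fintype.card_congr (Equiv.subtypeEquivRight hlt), Fintype.card_subtype,
    Finset.filter_gt_eq_Iio, Fin.card_Iio]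

lemma SimpleGraph.card_le_card_connectedComponent_add_ncard_edgeSet {W : Type*} [Fintype W]
    [DecidableEq W] (H : SimpleGraph W) [DecidableRel H.Adj] :
    Fintype.card W ≤ Fintype.card H.ConnectedComponent + H.edgeSet.ncard := by
  let D : (W → ℝ) →ₗ[ℝ] (H.edgeSet → ℝ) :=
    LinearMap.funLeft ℝ ℝ (fun e : H.edgeSet => e.1.out.1) -
      LinearMap.funLeft ℝ ℝ (fun e : H.edgeSet => e.1.out.2)
  have hker : LinearMap.ker D ≤ LinearMap.ker (toLin' (H.lapMatrix ℝ)) := fun y hy => by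
    rw [LinearMap.mem_ker, toLin'_apply, lapMatrix_mulVec_eq_zero_iff_forall_adj]
    exact fun a b hab =>
      Sym2.eq_of_apply_out_eq (sub_eq_zero.mp (congrFun (LinearMap.mem_ker.mp hy) ⟨s(a, b), hab⟩))
  have hrank := D.finrank_range_add_finrank_ker
  have hrange : Module.finrank ℝ (LinearMap.range D) ≤ H.edgeSet.ncard := by
    simpa [← Nat.card_coe_set_eq, Nat.card_eq_fintype_card] using
      Submodule.finrank_le (LinearMap.range D)
  have hcomp := Submodule.finrank_mono hker
  rw [← SimpleGraph.card_connectedComponent_eq_finrank_ker_toLin'_lapMatrix] at hcomp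
  rw [Module.finrank_fintype_fun_eq_card] at hrank
  omega

section Schrodinger

variable {V : ℕ} {G : SimpleGraph (Fin V)} {q f : Fin V → ℝ} {lam : ℝ}

lemma Ham_eq_diagonal_sub_adjMatrix [DecidableRel G.Adj] :
    Ham G q = diagonal q - G.adjMatrix ℝ := by
  ext a b
  by_cases h : a = b
  · subst h; simp [Ham]
  · by_cases hab : G.Adj a b <;> simp [Ham, h, hab]

lemma Ham_mulVec_apply [DecidableRel G.Adj] (x : Fin V → ℝ) (a : Fin V) :
    (Ham G q *ᵥ x) a = q a * x a - ∑ b, if G.Adj a b then x b else 0 := by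
  rw [Ham_eq_diagonal_sub_adjMatrix, sub_mulVec, Pi.sub_apply, mulVec_diagonal,
    SimpleGraph.adjMatrix_mulVec_apply, SimpleGraph.neighborFinset_eq_filter, Finset.sum_filter]

lemma dotProduct_Ham_mulVec_mul_sub_eq [DecidableRel G.Adj] (heig : Ham G q *ᵥ f = lam • f)
    (y : Fin V → ℝ) :
    (f * y) ⬝ᵥ Ham G q *ᵥ (f * y) - lam * ((f * y) ⬝ᵥ (f * y)) =
      (∑ a, ∑ b, if G.Adj a b then f a * f b * (y a - y b) ^ 2 else 0) / 2 := by
  have hq : ∀ a, (q a - lam) * f a = ∑ b, if G.Adj a b then f b else 0 := fun a => by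
    have := congrFun heig a
    rw [Ham_mulVec_apply, Pi.smul_apply, smul_eq_mul] at this
    linarith
  have hhalf : (f * y) ⬝ᵥ Ham G q *ᵥ (f * y) - lam * ((f * y) ⬝ᵥ (f * y)) =
      ∑ a, ∑ b, if G.Adj a b then f a * f b * (y a ^ 2 - y a * y b) else 0 := by
    simp only [dotProduct, Ham_mulVec_apply, Finset.mul_sum, ← Finset.sum_sub_distrib]
    refine Finset.sum_congr rfl fun a _ => ?_
    have hsplit : (∑ b, if G.Adj a b then f a * f b * (y a ^ 2 - y a * y b) else 0) =
        (∑ b, if G.Adj a b then f b else 0) * (f a * y a ^ 2) -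
          f a * y a * ∑ b, if G.Adj a b then f b * y b else 0 := by
      rw [Finset.sum_mul, Finset.mul_sum, ← Finset.sum_sub_distrib]
      refine Finset.sum_congr rfl fun b _ => ?_
      split_ifs <;> ring
    simp only [Pi.mul_apply]
    rw [hsplit, ← hq a]
    ring
  have hswap : (∑ a, ∑ b, if G.Adj a b then f a * f b * (y a ^ 2 - y a * y b) else 0) =
      ∑ a, ∑ b, if G.Adj a b then f a * f b * (y b ^ 2 - y a * y b) else 0 := by
    rw [Finset.sum_comm]
    refine Finset.sum_congr rfl fun a _ => Finset.sum_congr rfl fun b _ => ?_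
    simp only [G.adj_comm b a]
    split_ifs <;> ring
  rw [eq_div_iff two_ne_zero, mul_two, hhalf]
  nth_rewrite 2 [hswap]
  simp only [← Finset.sum_add_distrib]
  refine Finset.sum_congr rfl fun a _ => Finset.sum_congr rfl fun b _ => ?_
  split_ifs <;> ring

lemma le_dotProduct_Ham_mulVec_mul [DecidableRel G.Adj] (heig : Ham G q *ᵥ f = lam • f)
    (y : Fin V → ℝ) (hy : ∀ a b, (G \ posSub G f).Adj a b → y a = y b) :
    lam * ((f * y) ⬝ᵥ (f * y)) ≤ (f * y) ⬝ᵥ Ham G q *ᵥ (f * y) := by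
  rw [← sub_nonneg, dotProduct_Ham_mulVec_mul_sub_eq heig]
  refine div_nonneg (Finset.sum_nonneg fun a _ => Finset.sum_nonneg fun b _ => ?_) zero_le_two
  split_ifs with hab
  · by_cases hpos : 0 < f a * f b
    · positivity
    · simp [hy a b ⟨hab, fun h => hpos h.2⟩]
  · rfl

lemma dotProduct_Ham_mulVec_mul_lt [DecidableRel G.Adj] (heig : Ham G q *ᵥ f = lam • f)
    (hf : ∀ v, f v ≠ 0) (y : Fin V → ℝ) (hy : ∀ a b, (posSub G f).Adj a b → y a = y b)
    (hne : ∃ a b, G.Adj a b ∧ y a ≠ y b) :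
    (f * y) ⬝ᵥ Ham G q *ᵥ (f * y) < lam * ((f * y) ⬝ᵥ (f * y)) := by
  obtain ⟨a₀, b₀, hab₀, hne₀⟩ := hne
  have hterm : ∀ a b, (if G.Adj a b then f a * f b * (y a - y b) ^ 2 else 0) ≤ 0 := fun a b => by
    split_ifs with hab
    · by_cases hpos : 0 < f a * f b
      · simp [hy a b ⟨hab, hpos⟩]
      · exact mul_nonpos_of_nonpos_of_nonneg (not_lt.mp hpos) (sq_nonneg _)
    · rfl
  have hterm₀ : (if G.Adj a₀ b₀ then f a₀ * f b₀ * (y a₀ - y b₀) ^ 2 else 0) < 0 := by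
    have hneg : f a₀ * f b₀ < 0 := (not_lt.mp fun hpos => hne₀ (hy a₀ b₀ ⟨hab₀, hpos⟩)).lt_of_ne
      (mul_ne_zero (hf a₀) (hf b₀))
    rw [if_pos hab₀]
    exact mul_neg_of_neg_of_pos hneg (pow_two_pos_of_ne_zero (sub_ne_zero.mpr hne₀))
  rw [← sub_neg, dotProduct_Ham_mulVec_mul_sub_eq heig]
  refine div_neg_of_neg_of_pos ?_ two_pos
  exact Finset.sum_neg' (fun a _ => Finset.sum_nonpos fun b _ => hterm a b)
    ⟨a₀, Finset.mem_univ _, Finset.sum_neg' (fun b _ => hterm a₀ b) ⟨b₀, Finset.mem_univ _, hterm₀⟩⟩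

lemma flipCount_eq_ncard_edgeSet_sdiff (hf : ∀ v, f v ≠ 0) :
    flipCount G f = (G \ posSub G f).edgeSet.ncard := by
  unfold flipCount
  congr 1
  ext e
  induction e using Sym2.ind with
  | _ a b =>
    simp only [Set.mem_ofPred_eq, SimpleGraph.mem_edgeSet, SimpleGraph.sdiff_adj, posSub]
    constructor
    · rintro ⟨hab, c, d, hcd, hneg⟩
      refine ⟨hab, fun h => ?_⟩
      rcases Sym2.eq_iff.mp hcd with ⟨rfl, rfl⟩ | ⟨rfl, rfl⟩ <;> linarith [mul_comm (f a) (f b)]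
    · rintro ⟨hab, hpos⟩
      exact ⟨hab, a, b, rfl, (not_lt.mp fun h => hpos ⟨hab, h⟩).lt_of_ne
        (mul_ne_zero (hf a) (hf b))⟩

lemma card_add_flipCount_le_nodalCount_add (hf : ∀ v, f v ≠ 0) :
    V + flipCount G f ≤ nodalCount G f + G.edgeSet.ncard := by
  classical
  have hcomp := (posSub G f).card_le_card_connectedComponent_add_ncard_edgeSet
  have hsplit : (posSub G f).edgeSet.ncard + flipCount G f = G.edgeSet.ncard := by
    rw [flipCount_eq_ncard_edgeSet_sdiff hf, SimpleGraph.edgeSet_sdiff, add_comm]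
    exact Set.ncard_sdiff_add_ncard_of_subset (SimpleGraph.edgeSet_mono fun _ _ h => h.1)
  rw [Fintype.card_fin] at hcomp
  rw [nodalCount, Nat.card_eq_fintype_card]
  omega

lemma card_eigenvalues_lt_le_flipCount (heig : Ham G q *ᵥ f = lam • f) (hf : ∀ v, f v ≠ 0) :
    Nat.card {i // (Ham_isHermitian G q).eigenvalues i < lam} ≤ flipCount G f := by
  classical
  let K := LinearMap.ker (toLin' ((G \ posSub G f).lapMatrix ℝ))
  let L : K →ₗ[ℝ] Fin V → ℝ := LinearMap.mulLeft ℝ f ∘ₗ K.subtype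
  have hLinj : Function.Injective L := fun z w hzw => Subtype.ext <| funext fun v =>
    mul_left_cancel₀ (hf v) (congrFun hzw v)
  have hL : ∀ z, lam * (L z ⬝ᵥ L z) ≤ L z ⬝ᵥ Ham G q *ᵥ L z := fun z =>
    le_dotProduct_Ham_mulVec_mul heig z <|
      (SimpleGraph.lapMatrix_mulVec_eq_zero_iff_forall_adj _).mp (LinearMap.mem_ker.mp z.2)
  have hinertia := (Ham_isHermitian G q).finrank_add_card_eigenvalues_lt_le lam L hLinj hL
  have hcomp := (G \ posSub G f).card_le_card_connectedComponent_add_ncard_edgeSet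
  rw [← SimpleGraph.card_connectedComponent_eq_finrank_ker_toLin'_lapMatrix] at hinertia
  rw [← flipCount_eq_ncard_edgeSet_sdiff hf] at hcomp
  omega

lemma nodalCount_le_card_eigenvalues_lt_add_one (hconn : G.Connected)
    (heig : Ham G q *ᵥ f = lam • f) (hf : ∀ v, f v ≠ 0) :
    nodalCount G f ≤ Nat.card {i // (Ham_isHermitian G q).eigenvalues i < lam} + 1 := by
  classical
  obtain ⟨v₀⟩ := hconn.nonempty
  let K := LinearMap.ker (toLin' ((posSub G f).lapMatrix ℝ))
  let ev : K →ₗ[ℝ] ℝ := LinearMap.proj v₀ ∘ₗ K.subtype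
  let L : LinearMap.ker ev →ₗ[ℝ] Fin V → ℝ :=
    LinearMap.mulLeft ℝ f ∘ₗ K.subtype ∘ₗ (LinearMap.ker ev).subtype
  have hL : ∀ z ≠ 0, L z ⬝ᵥ Ham G q *ᵥ L z < lam * (L z ⬝ᵥ L z) := by
    intro z hz
    set y : Fin V → ℝ := ((z : K) : Fin V → ℝ)
    have hy₀ : y v₀ = 0 := LinearMap.mem_ker.mp z.2
    refine dotProduct_Ham_mulVec_mul_lt heig hf y
      ((SimpleGraph.lapMatrix_mulVec_eq_zero_iff_forall_adj _).mp
        (LinearMap.mem_ker.mp (z : K).2)) ?_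
    by_contra! hconst
    have hreach := (SimpleGraph.lapMatrix_mulVec_eq_zero_iff_forall_reachable G).mp
      ((SimpleGraph.lapMatrix_mulVec_eq_zero_iff_forall_adj G).mpr hconst)
    exact hz <| Subtype.ext <| Subtype.ext <| funext fun v => (hreach v v₀ (hconn v v₀)).trans hy₀
  have hinertia :=
    (Ham_isHermitian G q).finrank_le_card_eigenvalues_lt (E := LinearMap.ker ev) lam L hL
  have hcodim : Module.finrank ℝ K ≤ Module.finrank ℝ (LinearMap.ker ev) + 1 := by
    have := ev.finrank_range_add_finrank_ker
    have := Submodule.finrank_le (LinearMap.range ev)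
    rw [Module.finrank_self] at this
    omega
  calc nodalCount G f = Module.finrank ℝ K := by
        rw [nodalCount, Nat.card_eq_fintype_card,
          SimpleGraph.card_connectedComponent_eq_finrank_ker_toLin'_lapMatrix]
    _ ≤ _ := by omega

end Schrodinger

/-- **Fiedler / discrete Sturm.** On a finite tree `T` (connected with
`E = V - 1`), every non-degenerate eigenvector `f⁽ⁿ⁾` of a discrete Schrödinger operator is
Courant sharp: `ν_n = n` and `φ_n = n - 1` (`1`-based; here `n = (n₀ : ℕ) + 1` with
`n₀ : Fin V` a `0`-based position). -/
theorem stmt_18 {V : ℕ} (T : SimpleGraph (Fin V)) (hconn : T.Connected)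
    (htree : T.edgeSet.ncard + 1 = V) (q : Fin V → ℝ)
    (f : Fin V → ℝ) (n : Fin V)
    (heig : Ham T q *ᵥ f = sortedEigs (Ham_isHermitian T q) n • f)
    (hnz : ∀ v, f v ≠ 0)
    (hsimple : ∀ k : Fin V,
      sortedEigs (Ham_isHermitian T q) k = sortedEigs (Ham_isHermitian T q) n → k = n) :
    nodalCount T f = (n : ℕ) + 1 ∧ flipCount T f = (n : ℕ) := by
  have hbelow := Tuple.card_lt_apply_sort _ n hsimple
  have hflip := card_eigenvalues_lt_le_flipCount heig hnz
  have hnodal := nodalCount_le_card_eigenvalues_lt_add_one hconn heig hnz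
  have hedges := card_add_flipCount_le_nodalCount_add (G := T) hnz
  simp only [sortedEigs, Function.comp_apply] at hflip hnodal
  omega
end
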